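/- arXiv:1301.5139 — 6 statements merged into one kernel-verified Lean document; each statement's English description precedes it below -/
import Mathlib

section
/- Any state that is a model of a basic separation-logic formula φ has tree width at most max(|φ|, |PVar|), where |φ| is the total number of variable occurrences in the spatial part of φ: formally, if S = ⟨s,h⟩ and interpretation ι satisfy S,ι ⊨ φ for a basic SL formula φ (a quantified conjunction of a pure and a spatial part under strict points-to semantics), then tw(S) ≤ max(|φ|, |PVar|). -/
/-!
A two-node tree decomposition suffices. One bag holds the image of the store, at most `|PV|`
locations; the other holds every location allocated in or pointed to by the heap, and under the
strict points-to semantics each variable occurrence of the spatial part contributes at most one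
such location, so there are at most `|φ|` of them. Every edge lies in the heap bag, and with only
two nodes the connectivity condition of a tree decomposition holds trivially.
-/

namespace SLTW

/-- Tree positions: finite sequences of naturals. -/
abbrev Pos := List ℕ

/-- `parentOf p q` : `p` is the parent of `q`, i.e. `q = p.i`. -/
def parentOf (p q : Pos) : Prop := ∃ i : ℕ, q = p ++ [i]

/-- Adjacency in a tree: parent in either direction. -/
def adj (p q : Pos) : Prop := parentOf p q ∨ parentOf q p

/-- A path in a tree with domain `D` from `p` to `q`: pairwise distinct positions,
consecutive ones related by the parent relation. -/
def isPath (D : Set Pos) (l : List Pos) (p q : Pos) : Prop :=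
  l ≠ [] ∧ l.Chain' adj ∧ l.Nodup ∧ (∀ x ∈ l, x ∈ D) ∧ l.head? = some p ∧ l.getLast? = some q

/-- `q` lies on some path from `p` to `r` in the tree with domain `D`. -/
def onPath (D : Set Pos) (q p r : Pos) : Prop := ∃ l, isPath D l p r ∧ q ∈ l

/-- A prefix-closed set of tree positions. -/
def prefixClosed (D : Set Pos) : Prop := ∀ p q : Pos, p <+: q → q ∈ D → p ∈ D

/-- A tree decomposition of a graph with vertex set `V` and (directed) edge set `E`. -/
structure TreeDecomp {α : Type} (V : Set α) (E : Set (α × α)) where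
  dom : Set Pos
  bag : Pos → Set α
  dom_fin : dom.Finite
  dom_pc : prefixClosed dom
  cover_v : ∀ v ∈ V, ∃ p ∈ dom, v ∈ bag p
  cover_e : ∀ e ∈ E, ∃ p ∈ dom, e.1 ∈ bag p ∧ e.2 ∈ bag p
  conn : ∀ p q r, p ∈ dom → q ∈ dom → r ∈ dom → onPath dom q p r →
    bag p ∩ bag r ⊆ bag q

/-- The decomposition has width at most `w`: every bag is finite of cardinality `≤ w + 1`. -/
def TreeDecomp.widthLE {α : Type} {V : Set α} {E : Set (α × α)}
    (t : TreeDecomp V E) (w : ℕ) : Prop :=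
  ∀ p ∈ t.dom, (t.bag p).Finite ∧ (t.bag p).ncard ≤ w + 1

/-- The graph `(V, E)` has tree width at most `w`. -/
def twLE {α : Type} (V : Set α) (E : Set (α × α)) (w : ℕ) : Prop :=
  ∃ t : TreeDecomp V E, t.widthLE w

/-! ### States of Separation Logic -/

abbrev Loc := ℕ
abbrev PVar := ℕ
abbrev Sel := ℕ
abbrev Heap := Loc → Option (Sel → Option Loc)
abbrev Store := PVar → Option Loc

structure SLState where
  store : Store
  heap : Heap

/-- Domain of the heap (allocated locations). -/
def SLState.hdom (S : SLState) : Set Loc := {l | S.heap l ≠ none}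
/-- Image of the store. -/
def SLState.simg (S : SLState) : Set Loc := {l | ∃ u, S.store u = some l}
/-- Image of the heap: destinations of selector edges. -/
def SLState.hImg (S : SLState) : Set Loc :=
  {l | ∃ a f k, S.heap a = some f ∧ f k = some l}
/-- All locations of a state. -/
def SLState.locs (S : SLState) : Set Loc := S.simg ∪ S.hdom ∪ S.hImg
/-- Edges of the state, seen as a graph. -/
def SLState.edges (S : SLState) : Set (Loc × Loc) :=
  {e | ∃ f k, S.heap e.1 = some f ∧ f k = some e.2}
/-- Tree width of a state is at most `w`. -/
def SLState.twLE (S : SLState) (w : ℕ) : Prop := SLTW.twLE S.locs S.edges w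



/-! ### Syntax of basic SL formulae -/

abbrev LVar := ℕ
/-- Variables: program variables or logical variables. -/
abbrev Var := PVar ⊕ LVar

/-- Combined evaluation `s ⊕ ι` of program and logical variables. -/
def eval (s : Store) (ι : LVar → Option Loc) : Var → Option Loc
  | Sum.inl u => s u
  | Sum.inr x => ι x

inductive PureF where
  | eq (a b : Var)
  | ne (a b : Var)
  | and (p q : PureF)

inductive SpatialF where
  | emp
  | pto (a : Var) (bs : List Var)
  | star (s₁ s₂ : SpatialF)

inductive BasicF where
  | base (p : PureF) (s : SpatialF)
  | ex (x : LVar) (f : BasicF)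

/-- Number of variable occurrences in a spatial formula. -/
def SpatialF.size : SpatialF → ℕ
  | .emp => 0
  | .pto _ bs => 1 + bs.length
  | .star s₁ s₂ => s₁.size + s₂.size

/-- Size of a basic formula: variable occurrences of its spatial part. -/
def BasicF.size : BasicF → ℕ
  | .base _ s => s.size
  | .ex _ f => f.size

/-- Two heaps have disjoint domains. -/
def heapDisj (h₁ h₂ : Heap) : Prop := ∀ l, h₁ l = none ∨ h₂ l = none

/-- Union of two heaps (left-biased, used under disjointness). -/
def heapUnion (h₁ h₂ : Heap) : Heap := fun l => (h₁ l).orElse (fun _ => h₂ l)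

/-- The heap of a single allocated cell at `la` with selectors `1..n` pointing to
the evaluations of `bs` (strict semantics). -/
def ptoHeap (s : Store) (ι : LVar → Option Loc) (la : Loc) (bs : List Var) : Heap :=
  fun l => if l = la then
    some (fun k => if 1 ≤ k ∧ k ≤ bs.length then eval s ι (bs.getD (k-1) (Sum.inr 0)) else none)
  else none

def PureSat (S : SLState) (ι : LVar → Option Loc) : PureF → Prop
  | .eq a b => eval S.store ι a = eval S.store ι b ∧ eval S.store ι a ≠ none
  | .ne a b => eval S.store ι a ≠ eval S.store ι b ∧
      eval S.store ι a ≠ none ∧ eval S.store ι b ≠ none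
  | .and p q => PureSat S ι p ∧ PureSat S ι q

/-- Strict semantics of spatial formulae. -/
def SpSat (S : SLState) (ι : LVar → Option Loc) : SpatialF → Prop
  | .emp => ∀ l, S.heap l = none
  | .pto a bs => ∃ la, eval S.store ι a = some la ∧ (∀ b ∈ bs, eval S.store ι b ≠ none) ∧
      S.heap = ptoHeap S.store ι la bs
  | .star s₁ s₂ => ∃ h₁ h₂, heapDisj h₁ h₂ ∧ S.heap = heapUnion h₁ h₂ ∧
      SpSat ⟨S.store, h₁⟩ ι s₁ ∧ SpSat ⟨S.store, h₂⟩ ι s₂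

def BasicSat (S : SLState) (ι : LVar → Option Loc) : BasicF → Prop
  | .base p s => PureSat S ι p ∧ SpSat S ι s
  | .ex x f => ∃ l : Loc, BasicSat S (Function.update ι x (some l)) f

/-- Iterated separating conjunction. -/
def bigStar (l : List SpatialF) : SpatialF := l.foldr SpatialF.star SpatialF.emp

end SLTW

theorem List.encard_setOf_mem_le {α : Type*} (l : List α) :
    {x | x ∈ l}.encard ≤ l.length := by
  classical
  calc {x | x ∈ l}.encard = (l.toFinset.card : ℕ∞) := by
        rw [← Set.encard_coe_eq_coe_finsetCard, List.coe_toFinset]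
    _ ≤ l.length := by exact_mod_cast l.toFinset_card_le

namespace SLTW

lemma prefixClosed_pair_nil : prefixClosed {[], [0]} := by
  rintro p q hpq (rfl | rfl)
  · exact Or.inl (List.prefix_nil.mp hpq)
  · rcases List.prefix_cons_iff.mp hpq with rfl | ⟨t, rfl, ht⟩
    · exact Or.inl rfl
    · exact Or.inr (by simp [List.prefix_nil.mp ht])

lemma isPath.eq_singleton {D : Set Pos} {l : List Pos} {p : Pos} (h : isPath D l p p) :
    l = [p] := by
  obtain ⟨-, -, hnd, -, hhead, hlast⟩ := h
  obtain ⟨t, rfl⟩ : ∃ t, l = p :: t := by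
    cases l with
    | nil => simp at hhead
    | cons a t => simp_all
  cases t with
  | nil => rfl
  | cons b u =>
    -- the last element would repeat the head `p`
    rw [List.getLast?_cons_cons, List.getLast?_eq_some_getLast (List.cons_ne_nil b u),
      Option.some.injEq] at hlast
    exact absurd (hlast ▸ List.getLast_mem _) (List.nodup_cons.mp hnd).1

lemma onPath_pair_nil {q p r : Pos} (hq : q ∈ ({[], [0]} : Set Pos))
    (hp : p ∈ ({[], [0]} : Set Pos)) (hr : r ∈ ({[], [0]} : Set Pos))
    (h : onPath {[], [0]} q p r) : q = p ∨ q = r := by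
  by_cases hpr : p = r
  · subst hpr
    obtain ⟨l, hl, hql⟩ := h
    rw [hl.eq_singleton, List.mem_singleton] at hql
    exact Or.inl hql
  · simp only [Set.mem_insert_iff, Set.mem_singleton_iff] at hq hp hr
    rcases hq with rfl | rfl <;> rcases hp with rfl | rfl <;> rcases hr with rfl | rfl <;>
      simp_all

theorem twLE_of_two_bags {α : Type} {V : Set α} {E : Set (α × α)} {w : ℕ} (A B : Set α)
    (hV : V ⊆ A ∪ B) (hE : ∀ e ∈ E, (e.1 ∈ A ∧ e.2 ∈ A) ∨ (e.1 ∈ B ∧ e.2 ∈ B))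
    (hA : A.encard ≤ w + 1) (hB : B.encard ≤ w + 1) : twLE V E w := by
  let t : TreeDecomp V E :=
    { dom := {[], [0]}
      bag := fun p => if p = [] then A else B
      dom_fin := Set.toFinite _
      dom_pc := prefixClosed_pair_nil
      cover_v := fun v hv => (hV hv).elim (fun h => ⟨[], by simp, by simpa⟩)
        (fun h => ⟨[0], by simp, by simpa⟩)
      cover_e := fun e he => (hE e he).elim (fun h => ⟨[], by simp, by simpa⟩)
        (fun h => ⟨[0], by simp, by simpa⟩)
      conn := fun p q r hp hq hr h => by
        rcases onPath_pair_nil hq hp hr h with rfl | rfl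
        · exact Set.inter_subset_left
        · exact Set.inter_subset_right }
  refine ⟨t, fun p _ => ?_⟩
  rw [← Set.encard_le_coe_iff_finite_ncard_le]
  by_cases hp : p = [] <;> simp only [t, hp, if_true, if_false] <;> exact_mod_cast ‹_›

def heapLocs (h : Heap) : Set Loc :=
  {l | h l ≠ none} ∪ {l | ∃ a f k, h a = some f ∧ f k = some l}

lemma SLState.locs_eq (S : SLState) : S.locs = S.simg ∪ heapLocs S.heap :=
  Set.union_assoc _ _ _

lemma SLState.mem_heapLocs_of_mem_edges {S : SLState} {e : Loc × Loc} (he : e ∈ S.edges) :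
    e.1 ∈ heapLocs S.heap ∧ e.2 ∈ heapLocs S.heap := by
  obtain ⟨f, k, hf, hfk⟩ := he
  exact ⟨Or.inl (by simp [hf]), Or.inr ⟨e.1, f, k, hf, hfk⟩⟩

lemma SLState.encard_simg_le {S : SLState} {PV : Finset PVar}
    (hPV : ∀ u : PVar, S.store u ≠ none → u ∈ PV) : S.simg.encard ≤ PV.card := by
  have hsub : S.simg ⊆ (fun u => (S.store u).getD 0) '' PV := by
    rintro l ⟨u, hu⟩
    exact ⟨u, hPV u (by simp [hu]), by simp [hu]⟩
  calc S.simg.encard ≤ ((fun u => (S.store u).getD 0) '' PV).encard := Set.encard_le_encard hsub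
    _ ≤ (PV : Set PVar).encard := Set.encard_image_le _ _
    _ = PV.card := Set.encard_coe_eq_coe_finsetCard PV

lemma heapLocs_heapUnion_subset (h₁ h₂ : Heap) :
    heapLocs (heapUnion h₁ h₂) ⊆ heapLocs h₁ ∪ heapLocs h₂ := by
  have split : ∀ a f, heapUnion h₁ h₂ a = some f → h₁ a = some f ∨ h₂ a = some f := by
    intro a f ha
    cases h1 : h₁ a <;> simp_all [heapUnion]
  rintro l (hl | ⟨a, f, k, hf, hfk⟩)
  · obtain ⟨f, hf⟩ := Option.ne_none_iff_exists'.mp hl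
    exact (split l f hf).imp (fun h => Or.inl (by simp [h])) (fun h => Or.inl (by simp [h]))
  · exact (split a f hf).imp (fun h => Or.inr ⟨a, f, k, h, hfk⟩)
      (fun h => Or.inr ⟨a, f, k, h, hfk⟩)

lemma heapLocs_ptoHeap_subset (s : Store) (ι : LVar → Option Loc) (la : Loc) (bs : List Var) :
    heapLocs (ptoHeap s ι la bs) ⊆ insert la {l | l ∈ bs.filterMap (eval s ι)} := by
  rintro l (hl | ⟨a, f, k, hf, hfk⟩)
  · left
    by_contra hne
    exact hl (by simp [ptoHeap, hne])
  · right
    by_cases ha : a = la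
    · subst ha
      simp only [ptoHeap, if_true, Option.some.injEq] at hf
      subst hf
      dsimp only at hfk
      split_ifs at hfk with hk
      have hlt : k - 1 < bs.length := Nat.sub_one_lt_of_le hk.1 hk.2
      rw [List.getD_eq_getElem _ _ hlt] at hfk
      exact List.mem_filterMap.mpr ⟨_, List.getElem_mem hlt, hfk⟩
    · simp [ptoHeap, ha] at hf

lemma encard_heapLocs_le_of_spSat {s : Store} {ι : LVar → Option Loc} :
    ∀ {sp : SpatialF} {h : Heap}, SpSat ⟨s, h⟩ ι sp → (heapLocs h).encard ≤ sp.size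
  | .emp, h, hsat => by
    have : heapLocs h = ∅ := by
      ext l
      simp [heapLocs, show ∀ l, h l = none from hsat]
    simp [this]
  | .pto a bs, h, ⟨la, _, _, hh⟩ => by
    rw [show h = ptoHeap s ι la bs from hh]
    calc (heapLocs (ptoHeap s ι la bs)).encard
        ≤ {l | l ∈ bs.filterMap (eval s ι)}.encard + 1 :=
          (Set.encard_le_encard (heapLocs_ptoHeap_subset s ι la bs)).trans
            (Set.encard_insert_le _ _)
      _ ≤ bs.length + 1 := by
          gcongr
          exact (List.encard_setOf_mem_le _).trans
            (by exact_mod_cast List.length_filterMap_le _ _)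
      _ = SpatialF.size (.pto a bs) := by simp [SpatialF.size, add_comm]
  | .star sp₁ sp₂, h, ⟨h₁, h₂, _, hh, hsat₁, hsat₂⟩ => by
    subst hh
    calc (heapLocs (heapUnion h₁ h₂)).encard ≤ (heapLocs h₁ ∪ heapLocs h₂).encard :=
          Set.encard_le_encard (heapLocs_heapUnion_subset h₁ h₂)
      _ ≤ (heapLocs h₁).encard + (heapLocs h₂).encard := Set.encard_union_le _ _
      _ ≤ sp₁.size + sp₂.size := add_le_add (encard_heapLocs_le_of_spSat hsat₁)
          (encard_heapLocs_le_of_spSat hsat₂)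
      _ = SpatialF.size (.star sp₁ sp₂) := by simp [SpatialF.size]

lemma encard_heapLocs_le_of_basicSat {S : SLState} :
    ∀ {φ : BasicF} {ι : LVar → Option Loc}, BasicSat S ι φ →
      (heapLocs S.heap).encard ≤ φ.size
  | .base _ _, _, hsat => encard_heapLocs_le_of_spSat hsat.2
  | .ex _ φ, _, ⟨_, hsat⟩ => encard_heapLocs_le_of_basicSat (φ := φ) hsat

end SLTW

open SLTW in
/-- any model of a basic SL formula `φ` has tree width at most
`max |φ| |PVar|`, where the program variables in use form the finite set `PV`. -/
theorem basic_formula_treewidth (S : SLState) (ι : LVar → Option Loc) (φ : BasicF)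
    (PV : Finset PVar) (hPV : ∀ u : PVar, S.store u ≠ none → u ∈ PV)
    (hsat : BasicSat S ι φ) :
    S.twLE (max φ.size PV.card) := by
  have hheap := encard_heapLocs_le_of_basicSat hsat
  have hstore := S.encard_simg_le hPV
  refine twLE_of_two_bags S.simg (heapLocs S.heap) S.locs_eq.subset
    (fun e he => Or.inr (S.mem_heapLocs_of_mem_edges he)) ?_ ?_
  · exact hstore.trans (by norm_cast; omega)
  · exact hheap.trans (by norm_cast; omega)
end

section
/- If two states S₁ = ⟨s₁,h₁⟩ and S₂ = ⟨s₂,h₂⟩ have disjoint heap domains and their stores agree on common variables, and t₁, t₂ are tree decompositions of S₁, S₂ of widths w₁, w₂ respectively, then the state S₁ ⊎ S₂ admits a tree decomposition of width at most max(w₁, w₂, |D| - 1) + |D|, where D is the set of locations shared between loc(S₁) and loc(S₂). In particular, if the set of shared locations is bounded, composing two bounded-tree-width states yields a bounded-tree-width state. -/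
namespace SLTW

/-!
Cut every bag of `tᵢ` down to `loc(Sᵢ)`, add the shared locations `D` to all bags, and hang both
trees below a new root with bag `D`. A simple path between two nodes of the same subtree never
leaves it (it could only leave and re-enter through the subtree's root), so connectivity there is
inherited from `tᵢ`; a location occurring in bags of both subtrees lies in
`loc(S₁) ∩ loc(S₂) = D`, which is in every bag. Every bag grows by at most `|D|`.
-/

@[simp]
theorem parentOf_cons_cons {j : ℕ} {p q : Pos} : parentOf (j :: p) (j :: q) ↔ parentOf p q := by
  simp [parentOf]

@[simp]
theorem adj_cons_cons {j : ℕ} {p q : Pos} : adj (j :: p) (j :: q) ↔ adj p q := by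
  simp [adj]

theorem eq_of_adj_of_not_prefix {u p q : Pos} (hpq : adj p q) (hp : ¬ u <+: p) (hq : u <+: q) :
    q = u := by
  rcases hpq with ⟨i, rfl⟩ | ⟨i, rfl⟩
  · exact ((List.prefix_concat_iff.mp hq).resolve_right hp).symm
  · exact absurd (hq.trans (List.prefix_append _ _)) hp

theorem mem_of_isChain_adj_of_prefix {u a b : Pos} {l : List Pos} (hl : (a :: l).IsChain adj)
    (ha : ¬ u <+: a) (hb : b ∈ a :: l) (hub : u <+: b) : u ∈ a :: l := by
  by_contra hu
  have hl' : (a :: l).IsChain (fun x y => adj x y ∧ y ≠ u) :=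
    hl.imp_of_mem_imp fun _ _ _ hy hxy => ⟨hxy, ne_of_mem_of_not_mem hy hu⟩
  have hout : ∀ x ∈ a :: l, ¬ u <+: x :=
    List.forall_mem_cons.mpr ⟨ha, hl'.cons_induction (fun x => ¬ u <+: x) l
      (fun _ _ hxy hx hy => hxy.2 (eq_of_adj_of_not_prefix hxy.1 hx hy)) ha⟩
  exact hout b hb hub

/-- Leaving the subtree rooted at `u` and coming back would pass through `u` twice. -/
theorem isPath.prefix_of_mem {D : Set Pos} {l : List Pos} {p r u : Pos} (hl : isPath D l p r)
    (hp : u <+: p) (hr : u <+: r) : ∀ x ∈ l, u <+: x := by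
  obtain ⟨-, hchain, hnodup, -, hhead, hlast⟩ := hl
  intro x hx
  by_contra hux
  obtain ⟨s, t, rfl⟩ := List.append_of_mem hx
  have hu_t : u ∈ x :: t :=
    mem_of_isChain_adj_of_prefix hchain.right_of_append hux
      (List.mem_of_mem_getLast? (by simpa using hlast)) hr
  have hu_s : u ∈ x :: s.reverse := by
    have hrev : (x :: s.reverse).IsChain adj := by
      have : (s ++ [x]).IsChain adj := hchain.prefix (by simp)
      have := List.isChain_reverse.mpr (this.imp fun _ _ h => Or.symm h)
      rwa [List.reverse_concat'] at this
    refine mem_of_isChain_adj_of_prefix hrev hux ?_ hp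
    have : p ∈ (s ++ [x]).head? := by cases s <;> simpa using hhead
    simpa [or_comm] using List.mem_of_mem_head? this
  have hu_s' : u ∈ s := by
    have hux' : u ≠ x := by rintro rfl; exact hux List.prefix_rfl
    simpa [hux'] using hu_s
  exact (List.nodup_append.mp hnodup).2.2 u hu_s' u hu_t rfl

theorem isPath_of_map_cons {D D' : Set Pos} {j : ℕ} {l : List Pos} {p r : Pos}
    (hD : ∀ x, j :: x ∈ D → x ∈ D') (hl : isPath D (l.map (List.cons j)) (j :: p) (j :: r)) :
    isPath D' l p r := by
  obtain ⟨hne, hchain, hnodup, hmem, hhead, hlast⟩ := hl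
  refine ⟨by simpa using hne, ?_, (List.nodup_map_iff List.cons_injective).mp hnodup,
    fun x hx => hD x (hmem _ (List.mem_map_of_mem hx)), ?_, ?_⟩
  · exact ((List.isChain_map _).mp hchain).imp fun _ _ => adj_cons_cons.mp
  · simpa [List.head?_map] using hhead
  · simpa [List.getLast?_map] using hlast

theorem exists_onPath_of_onPath_cons {D D' : Set Pos} {j : ℕ} {q p r : Pos}
    (hD : ∀ x, j :: x ∈ D → x ∈ D') (h : onPath D q (j :: p) (j :: r)) :
    ∃ q', q = j :: q' ∧ onPath D' q' p r := by
  obtain ⟨l, hl, hq⟩ := h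
  have hsub : ∀ x ∈ l, [j] <+: x := hl.prefix_of_mem ⟨p, rfl⟩ ⟨r, rfl⟩
  have hl' : (l.map List.tail).map (List.cons j) = l := by
    rw [List.map_map]
    exact List.map_congr_left (fun x hx => by obtain ⟨t, rfl⟩ := hsub x hx; rfl) |>.trans l.map_id
  obtain ⟨q', rfl⟩ := hsub q hq
  exact ⟨q', rfl, l.map List.tail, isPath_of_map_cons hD (hl'.symm ▸ hl), List.mem_map_of_mem hq⟩

namespace TreeDecomp

variable {α : Type} {V V₁ V₂ : Set α} {E E₁ E₂ : Set (α × α)}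

def restrict (t : TreeDecomp V E) (hE : ∀ e ∈ E, e.1 ∈ V ∧ e.2 ∈ V) : TreeDecomp V E where
  dom := t.dom
  bag p := t.bag p ∩ V
  dom_fin := t.dom_fin
  dom_pc := t.dom_pc
  cover_v v hv := by
    obtain ⟨p, hp, hvp⟩ := t.cover_v v hv
    exact ⟨p, hp, hvp, hv⟩
  cover_e e he := by
    obtain ⟨p, hp, h₁, h₂⟩ := t.cover_e e he
    exact ⟨p, hp, ⟨h₁, (hE e he).1⟩, ⟨h₂, (hE e he).2⟩⟩
  conn p q r hp hq hr hpath := fun _ ⟨⟨hxp, hxV⟩, hxr, _⟩ =>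
    ⟨t.conn p q r hp hq hr hpath ⟨hxp, hxr⟩, hxV⟩

theorem widthLE.restrict {t : TreeDecomp V E} {w : ℕ} (ht : t.widthLE w)
    (hE : ∀ e ∈ E, e.1 ∈ V ∧ e.2 ∈ V) : (t.restrict hE).widthLE w := fun p hp =>
  ⟨(ht p hp).1.subset Set.inter_subset_left,
    (Set.ncard_le_ncard Set.inter_subset_left (ht p hp).1).trans (ht p hp).2⟩

theorem bag_inter_subset_of_onPath_cons (t : TreeDecomp V E) {Dom : Set Pos} {j : ℕ}
    (hDom : ∀ x, j :: x ∈ Dom → x ∈ t.dom) {p q r : Pos} (hp : p ∈ t.dom) (hr : r ∈ t.dom)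
    (h : onPath Dom q (j :: p) (j :: r)) : ∃ q', q = j :: q' ∧ t.bag p ∩ t.bag r ⊆ t.bag q' := by
  obtain ⟨q', rfl, l, hl, hq'⟩ := exists_onPath_of_onPath_cons hDom h
  exact ⟨q', rfl, t.conn p q' r hp (hl.2.2.2.1 q' hq') hr ⟨l, hl, hq'⟩⟩

def joinDom (t₁ : TreeDecomp V₁ E₁) (t₂ : TreeDecomp V₂ E₂) : Set Pos :=
  {[]} ∪ List.cons 0 '' t₁.dom ∪ List.cons 1 '' t₂.dom

def joinBag (D : Set α) (t₁ : TreeDecomp V₁ E₁) (t₂ : TreeDecomp V₂ E₂) : Pos → Set α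
  | 0 :: p => D ∪ t₁.bag p
  | 1 :: p => D ∪ t₂.bag p
  | _ => D

section Join

variable {D : Set α} {t₁ : TreeDecomp V₁ E₁} {t₂ : TreeDecomp V₂ E₂}

@[simp]
theorem cons_zero_mem_joinDom {p : Pos} : 0 :: p ∈ joinDom t₁ t₂ ↔ p ∈ t₁.dom := by
  simp [joinDom]

@[simp]
theorem cons_one_mem_joinDom {p : Pos} : 1 :: p ∈ joinDom t₁ t₂ ↔ p ∈ t₂.dom := by
  simp [joinDom]

@[simp]
theorem joinBag_nil : joinBag D t₁ t₂ [] = D := rfl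

@[simp]
theorem joinBag_cons_zero {p : Pos} : joinBag D t₁ t₂ (0 :: p) = D ∪ t₁.bag p := rfl

@[simp]
theorem joinBag_cons_one {p : Pos} : joinBag D t₁ t₂ (1 :: p) = D ∪ t₂.bag p := rfl

theorem subset_joinBag (p : Pos) : D ⊆ joinBag D t₁ t₂ p := by
  unfold joinBag
  split <;> simp

theorem prefixClosed_joinDom : prefixClosed (joinDom t₁ t₂) := by
  rintro p _ hpq ((rfl | ⟨q, hq, rfl⟩) | ⟨q, hq, rfl⟩)
  · exact Or.inl (Or.inl (List.prefix_nil.mp hpq))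
  all_goals
    rcases List.prefix_cons_iff.mp hpq with rfl | ⟨p, rfl, hp⟩
    · exact Or.inl (Or.inl rfl)
  · exact cons_zero_mem_joinDom.mpr (t₁.dom_pc p q hp hq)
  · exact cons_one_mem_joinDom.mpr (t₂.dom_pc p q hp hq)

theorem joinBag_conn (hD : ∀ p q, t₁.bag p ∩ t₂.bag q ⊆ D) {p q r : Pos}
    (hp : p ∈ joinDom t₁ t₂) (hr : r ∈ joinDom t₁ t₂) (h : onPath (joinDom t₁ t₂) q p r) :
    joinBag D t₁ t₂ p ∩ joinBag D t₁ t₂ r ⊆ joinBag D t₁ t₂ q := by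
  rcases hp with ((rfl | ⟨p, hp, rfl⟩) | ⟨p, hp, rfl⟩)
  · exact Set.inter_subset_left.trans (subset_joinBag q)
  all_goals rcases hr with ((rfl | ⟨r, hr, rfl⟩) | ⟨r, hr, rfl⟩)
  · exact Set.inter_subset_right.trans (subset_joinBag q)
  · obtain ⟨q, rfl, hq⟩ :=
      t₁.bag_inter_subset_of_onPath_cons (fun _ => cons_zero_mem_joinDom.mp) hp hr h
    simp only [joinBag_cons_zero, ← Set.union_inter_distrib_left]
    exact Set.union_subset_union_right D hq
  · rw [joinBag_cons_zero, joinBag_cons_one, ← Set.union_inter_distrib_left]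
    exact (Set.union_subset subset_rfl (hD p r)).trans (subset_joinBag q)
  · exact Set.inter_subset_right.trans (subset_joinBag q)
  · rw [joinBag_cons_zero, joinBag_cons_one, ← Set.union_inter_distrib_left, Set.inter_comm]
    exact (Set.union_subset subset_rfl (hD r p)).trans (subset_joinBag q)
  · obtain ⟨q, rfl, hq⟩ :=
      t₂.bag_inter_subset_of_onPath_cons (fun _ => cons_one_mem_joinDom.mp) hp hr h
    simp only [joinBag_cons_one, ← Set.union_inter_distrib_left]
    exact Set.union_subset_union_right D hq

def join (D : Set α) (t₁ : TreeDecomp V₁ E₁) (t₂ : TreeDecomp V₂ E₂)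
    (hD : ∀ p q, t₁.bag p ∩ t₂.bag q ⊆ D) : TreeDecomp (V₁ ∪ V₂) (E₁ ∪ E₂) where
  dom := joinDom t₁ t₂
  bag := joinBag D t₁ t₂
  dom_fin := ((Set.finite_singleton _).union (t₁.dom_fin.image _)).union (t₂.dom_fin.image _)
  dom_pc := prefixClosed_joinDom
  cover_v v hv := by
    rcases hv with hv | hv
    · obtain ⟨p, hp, hvp⟩ := t₁.cover_v v hv
      exact ⟨0 :: p, cons_zero_mem_joinDom.mpr hp, Or.inr hvp⟩
    · obtain ⟨p, hp, hvp⟩ := t₂.cover_v v hv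
      exact ⟨1 :: p, cons_one_mem_joinDom.mpr hp, Or.inr hvp⟩
  cover_e e he := by
    rcases he with he | he
    · obtain ⟨p, hp, h₁, h₂⟩ := t₁.cover_e e he
      exact ⟨0 :: p, cons_zero_mem_joinDom.mpr hp, Or.inr h₁, Or.inr h₂⟩
    · obtain ⟨p, hp, h₁, h₂⟩ := t₂.cover_e e he
      exact ⟨1 :: p, cons_one_mem_joinDom.mpr hp, Or.inr h₁, Or.inr h₂⟩
  conn _ _ _ hp _ hr h := joinBag_conn hD hp hr h

theorem widthLE_join (hD : ∀ p q, t₁.bag p ∩ t₂.bag q ⊆ D) (hDfin : D.Finite) {w₁ w₂ : ℕ}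
    (ht₁ : t₁.widthLE w₁) (ht₂ : t₂.widthLE w₂) :
    (join D t₁ t₂ hD).widthLE (max w₁ w₂ + D.ncard) := by
  have hunion : ∀ (B : Set α) (w : ℕ), B.Finite → B.ncard ≤ w + 1 → w ≤ max w₁ w₂ →
      (D ∪ B).Finite ∧ (D ∪ B).ncard ≤ max w₁ w₂ + D.ncard + 1 := fun B w hB hcard hw =>
    ⟨hDfin.union hB, (Set.ncard_union_le D B).trans (by omega)⟩
  rintro _ ((rfl | ⟨p, hp, rfl⟩) | ⟨p, hp, rfl⟩)
  · exact ⟨hDfin, by simp only [join, joinBag_nil]; omega⟩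
  · exact hunion _ w₁ (ht₁ p hp).1 (ht₁ p hp).2 (le_max_left _ _)
  · exact hunion _ w₂ (ht₂ p hp).1 (ht₂ p hp).2 (le_max_right _ _)

end Join

end TreeDecomp

theorem twLE.mono {α : Type} {V V' : Set α} {E E' : Set (α × α)} {w w' : ℕ} (h : twLE V E w)
    (hV : V' ⊆ V) (hE : E' ⊆ E) (hw : w ≤ w') : twLE V' E' w' := by
  obtain ⟨t, ht⟩ := h
  refine ⟨{ t with
      cover_v := fun v hv => t.cover_v v (hV hv)
      cover_e := fun e he => t.cover_e e (hE he) }, fun p hp => ?_⟩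
  exact ⟨(ht p hp).1, (ht p hp).2.trans (by omega)⟩

theorem heapUnion_eq_some {h₁ h₂ : Heap} {l : Loc} {f : Sel → Option Loc}
    (h : heapUnion h₁ h₂ l = some f) : h₁ l = some f ∨ h₂ l = some f :=
  ((Option.orElse_eq_some _ _ f).mp h).imp id And.right

namespace SLState

def union (S₁ S₂ : SLState) : SLState :=
  ⟨fun u => (S₁.store u).orElse (fun _ => S₂.store u), heapUnion S₁.heap S₂.heap⟩

theorem edges_subset_locs (S : SLState) : ∀ e ∈ S.edges, e.1 ∈ S.locs ∧ e.2 ∈ S.locs := by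
  rintro e ⟨f, k, hf, hk⟩
  exact ⟨Or.inl (Or.inr (by simp [hdom, hf])), Or.inr ⟨e.1, f, k, hf, hk⟩⟩

theorem store_union_eq_some {S₁ S₂ : SLState} {u : PVar} {l : Loc}
    (h : (S₁.union S₂).store u = some l) : S₁.store u = some l ∨ S₂.store u = some l :=
  ((Option.orElse_eq_some _ _ l).mp h).imp id And.right

theorem edges_union_subset (S₁ S₂ : SLState) : (S₁.union S₂).edges ⊆ S₁.edges ∪ S₂.edges := by
  rintro e ⟨f, k, hf, hk⟩
  exact (heapUnion_eq_some hf).imp (fun h => ⟨f, k, h, hk⟩) (fun h => ⟨f, k, h, hk⟩)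

theorem locs_union_subset (S₁ S₂ : SLState) : (S₁.union S₂).locs ⊆ S₁.locs ∪ S₂.locs := by
  rintro l ((⟨u, hu⟩ | hl) | ⟨a, f, k, hf, hk⟩)
  · exact (store_union_eq_some hu).imp (fun h => Or.inl (Or.inl ⟨u, h⟩))
      (fun h => Or.inl (Or.inl ⟨u, h⟩))
  · obtain ⟨f, hf⟩ := Option.ne_none_iff_exists'.mp hl
    exact (heapUnion_eq_some hf).imp (fun h => Or.inl (Or.inr (by simp [hdom, h])))
      (fun h => Or.inl (Or.inr (by simp [hdom, h])))
  · exact (heapUnion_eq_some hf).imp (fun h => Or.inr ⟨a, f, k, h, hk⟩)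
      (fun h => Or.inr ⟨a, f, k, h, hk⟩)

end SLState

end SLTW

open SLTW in
theorem union_state_treewidth_general (S₁ S₂ : SLState) (w₁ w₂ : ℕ)
    (t₁ : TreeDecomp S₁.locs S₁.edges) (ht₁ : t₁.widthLE w₁)
    (t₂ : TreeDecomp S₂.locs S₂.edges) (ht₂ : t₂.widthLE w₂)
    (hDfin : (S₁.locs ∩ S₂.locs).Finite) :
    SLState.twLE ⟨fun u => (S₁.store u).orElse (fun _ => S₂.store u), heapUnion S₁.heap S₂.heap⟩
      (max (max w₁ w₂) ((S₁.locs ∩ S₂.locs).ncard - 1) + (S₁.locs ∩ S₂.locs).ncard) := by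
  set D := S₁.locs ∩ S₂.locs
  let t₁' := t₁.restrict S₁.edges_subset_locs
  let t₂' := t₂.restrict S₂.edges_subset_locs
  have hshared : ∀ p q, t₁'.bag p ∩ t₂'.bag q ⊆ D := fun _ _ =>
    Set.inter_subset_inter Set.inter_subset_right Set.inter_subset_right
  have hjoin : twLE (S₁.locs ∪ S₂.locs) (S₁.edges ∪ S₂.edges) (max w₁ w₂ + D.ncard) :=
    ⟨_, TreeDecomp.widthLE_join hshared hDfin (ht₁.restrict _) (ht₂.restrict _)⟩
  exact hjoin.mono (S₁.locs_union_subset S₂) (S₁.edges_union_subset S₂)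
    (Nat.add_le_add_right (le_max_left _ _) _)

open SLTW in
/-- composing tree decompositions of two compatible states gives a
tree decomposition of the union state of width at most `max (max w₁ w₂) (|D|-1) + |D|`,
where `D` is the set of shared locations. -/
theorem union_state_treewidth (S₁ S₂ : SLState) (w₁ w₂ : ℕ)
    (hdisj : heapDisj S₁.heap S₂.heap)
    (hagree : ∀ u l₁ l₂, S₁.store u = some l₁ → S₂.store u = some l₂ → l₁ = l₂)
    (t₁ : TreeDecomp S₁.locs S₁.edges) (ht₁ : t₁.widthLE w₁)
    (t₂ : TreeDecomp S₂.locs S₂.edges) (ht₂ : t₂.widthLE w₂)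
    (hDfin : (S₁.locs ∩ S₂.locs).Finite) :
    SLState.twLE ⟨fun u => (S₁.store u).orElse (fun _ => S₂.store u), heapUnion S₁.heap S₂.heap⟩
      (max (max w₁ w₂) ((S₁.locs ∩ S₂.locs).ncard - 1) + (S₁.locs ∩ S₂.locs).ncard) :=
  union_state_treewidth_general S₁ S₂ w₁ w₂ t₁ ht₁ t₂ ht₂ hDfin
end

section
/- The class of n × n square grid graphs does not have bounded tree width: for every k there exists n such that the graph with vertex set {0,…,n-1} × {0,…,n-1} and edges between horizontally and vertically adjacent pairs has tree width greater than k. (It suffices to show tw(grid n) ≥ n for n ≥ 2, or any unbounded lower bound.) -/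
open SLTW in
/-- The vertex set of the `n × n` grid. -/
def gridV (n : ℕ) : Set (ℕ × ℕ) := {p | p.1 < n ∧ p.2 < n}

open SLTW in
/-- The edges of the `n × n` grid: horizontally and vertically adjacent pairs. -/
def gridE (n : ℕ) : Set ((ℕ × ℕ) × (ℕ × ℕ)) :=
  {e | e.1 ∈ gridV n ∧ e.2 ∈ gridV n ∧
    ((e.2.1 = e.1.1 + 1 ∧ e.2.2 = e.1.2) ∨ (e.2.1 = e.1.1 ∧ e.2.2 = e.1.2 + 1))}

open List Relation

namespace List

variable {α : Type*}

theorem head?_inits (s : List α) : s.inits.head? = some [] := by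
  cases s <;> rfl

theorem getLast?_inits : ∀ s : List α, s.inits.getLast? = some s
  | [] => rfl
  | a :: s => by
    rw [inits_cons, getLast?_cons, getLast?_map, getLast?_inits s]
    rfl

theorem nodup_inits : ∀ s : List α, s.inits.Nodup
  | [] => nodup_singleton _
  | a :: s => by
    rw [inits_cons, nodup_cons]
    exact ⟨by simp, (nodup_inits s).map cons_injective⟩

variable [DecidableEq α]

def commonPrefix : List α → List α → List α
  | [], _ => []
  | _ :: _, [] => []
  | a :: p, b :: q => if a = b then a :: commonPrefix p q else []

theorem commonPrefix_prefix_left : ∀ p q : List α, commonPrefix p q <+: p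
  | [], _ => by simp [commonPrefix]
  | _ :: _, [] => by simp [commonPrefix]
  | a :: p, b :: q => by
    by_cases h : a = b
    · simpa [commonPrefix, h] using commonPrefix_prefix_left p q
    · simp [commonPrefix, h]

theorem commonPrefix_prefix_right : ∀ p q : List α, commonPrefix p q <+: q
  | [], _ => by simp [commonPrefix]
  | _ :: _, [] => by simp [commonPrefix]
  | a :: p, b :: q => by
    by_cases h : a = b
    · simpa [commonPrefix, h] using commonPrefix_prefix_right p q
    · simp [commonPrefix, h]

theorem prefix_commonPrefix {r : List α} :
    ∀ {p q : List α}, r <+: p → r <+: q → r <+: commonPrefix p q := by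
  induction r with
  | nil => exact fun _ _ => nil_prefix
  | cons c r ih =>
    rintro (_ | ⟨a, p⟩) (_ | ⟨b, q⟩) hp hq
    · simp at hp
    · simp at hp
    · simp at hq
    obtain ⟨rfl, hrp⟩ := cons_prefix_cons.mp hp
    obtain ⟨rfl, hrq⟩ := cons_prefix_cons.mp hq
    simpa [commonPrefix] using ih hrp hrq

end List

namespace SLTW

theorem isChain_parentOf_inits : ∀ s : Pos, s.inits.IsChain parentOf
  | [] => .singleton _
  | a :: s => by
    rw [inits_cons, isChain_cons, head?_map, head?_inits]
    refine ⟨by simp [parentOf], isChain_map_of_isChain _ ?_ (isChain_parentOf_inits s)⟩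
    rintro x _ ⟨i, rfl⟩
    exact ⟨i, rfl⟩

def prefixPath (m s : Pos) : List Pos := s.inits.map (m ++ ·)

theorem mem_prefixPath {m s x : Pos} : x ∈ prefixPath m s ↔ m <+: x ∧ x <+: m ++ s := by
  simp only [prefixPath, mem_map, mem_inits]
  constructor
  · rintro ⟨t, ht, rfl⟩
    exact ⟨prefix_append m t, (prefix_append_right_inj m).mpr ht⟩
  · rintro ⟨⟨t, rfl⟩, h⟩
    exact ⟨t, (prefix_append_right_inj m).mp h, rfl⟩

variable {D : Set Pos}

theorem isPath_prefixPath (hD : prefixClosed D) {m s : Pos} (h : m ++ s ∈ D) :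
    isPath D (prefixPath m s) m (m ++ s) := by
  refine ⟨by cases s <;> simp [prefixPath], ?_, (nodup_inits s).map (append_right_injective m),
    fun x hx => hD x _ (mem_prefixPath.mp hx).2 h, ?_, ?_⟩
  · refine isChain_map_of_isChain _ ?_ (isChain_parentOf_inits s)
    rintro x _ ⟨i, rfl⟩
    exact Or.inl ⟨i, by simp⟩
  · simp [prefixPath, head?_inits]
  · simp [prefixPath, getLast?_inits]

theorem isPath.reverse {l : List Pos} {p q : Pos} (h : isPath D l p q) :
    isPath D l.reverse q p := by
  obtain ⟨hne, hc, hnd, hD, hp, hq⟩ := h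
  refine ⟨by simpa using hne, ?_, nodup_reverse.mpr hnd, fun x hx => hD x (mem_reverse.mp hx),
    by simpa using hq, by simpa using hp⟩
  exact isChain_reverse.mpr (hc.imp fun _ _ h => h.symm)

theorem isPath.append {l₁ l₂ : List Pos} {p m m' q : Pos} (h₁ : isPath D l₁ p m)
    (h₂ : isPath D l₂ m' q) (hm : adj m m') (hdisj : ∀ x ∈ l₁, x ∉ l₂) :
    isPath D (l₁ ++ l₂) p q := by
  obtain ⟨hne₁, hc₁, hnd₁, hD₁, hp₁, hq₁⟩ := h₁
  obtain ⟨hne₂, hc₂, hnd₂, hD₂, hp₂, hq₂⟩ := h₂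
  refine ⟨by simp [hne₁], ?_,
    nodup_append.mpr ⟨hnd₁, hnd₂, fun x hx y hy hxy => hdisj x hx (hxy ▸ hy)⟩,
    fun x hx => (mem_append.mp hx).elim (hD₁ x) (hD₂ x), by simp [head?_append, hp₁],
    by simp [getLast?_append, hq₂]⟩
  refine hc₁.append hc₂ ?_
  simp only [hq₁, hp₂, Option.mem_def, Option.some.injEq]
  rintro _ rfl _ rfl
  exact hm

theorem onPath_of_prefix (hD : prefixClosed D) {m x q : Pos} (hq : q ∈ D) (hmx : m <+: x)
    (hxq : x <+: q) : onPath D x m q := by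
  obtain ⟨s, rfl⟩ := hmx.trans hxq
  exact ⟨prefixPath m s, isPath_prefixPath hD hq, mem_prefixPath.mpr ⟨hmx, hxq⟩⟩

theorem onPath_commonPrefix (hD : prefixClosed D) {p q : Pos} (hp : p ∈ D) (hq : q ∈ D) :
    onPath D (commonPrefix p q) p q := by
  have hmp := commonPrefix_prefix_left p q
  have hmq := commonPrefix_prefix_right p q
  have hmax : ∀ {r}, r <+: p → r <+: q → r <+: commonPrefix p q := prefix_commonPrefix
  generalize commonPrefix p q = m at *
  obtain ⟨sp, rfl⟩ := hmp
  have hup := (isPath_prefixPath hD hp).reverse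
  have hm : m ∈ (prefixPath m sp).reverse :=
    mem_reverse.mpr (mem_prefixPath.mpr ⟨prefix_refl m, prefix_append m sp⟩)
  obtain ⟨_ | ⟨a, s⟩, rfl⟩ := hmq
  · exact ⟨_, by simpa using hup, hm⟩
  have hdown := isPath_prefixPath hD (by simpa using hq : m ++ [a] ++ s ∈ D)
  rw [append_cons]
  refine ⟨_, hup.append hdown (Or.inl ⟨a, rfl⟩) ?_, mem_append_left _ hm⟩
  intro x hxp hxq
  obtain ⟨hax, hxq⟩ := mem_prefixPath.mp hxq
  have hxm := hmax (mem_prefixPath.mp (mem_reverse.mp hxp)).2 (by simpa using hxq)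
  have := hax.length_le
  have := hxm.length_le
  simp only [length_append, length_singleton] at *
  omega

def linkedIn {α : Type*} (E : Set (α × α)) (S : Set α) (u v : α) : Prop :=
  u ∈ S ∧ v ∈ S ∧ ((u, v) ∈ E ∨ (v, u) ∈ E)

def IsConnectedIn {α : Type*} (E : Set (α × α)) (S : Set α) : Prop :=
  ∀ u ∈ S, ∀ v ∈ S, ReflTransGen (linkedIn E S) u v

namespace TreeDecomp

variable {α : Type} {V : Set α} {E : Set (α × α)} (t : TreeDecomp V E)

theorem inter_subset_bag_commonPrefix {p q : Pos} (hp : p ∈ t.dom) (hq : q ∈ t.dom) :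
    t.bag p ∩ t.bag q ⊆ t.bag (commonPrefix p q) :=
  t.conn p _ q hp (t.dom_pc _ p (commonPrefix_prefix_left p q) hp) hq
    (onPath_commonPrefix t.dom_pc hp hq)

theorem inter_subset_bag_of_prefix {p x q : Pos} (hq : q ∈ t.dom) (hpx : p <+: x)
    (hxq : x <+: q) : t.bag p ∩ t.bag q ⊆ t.bag x :=
  t.conn p x q (t.dom_pc p q (hpx.trans hxq) hq) (t.dom_pc x q hxq hq) hq
    (onPath_of_prefix t.dom_pc hq hpx hxq)

/-- Once this holds for every `v ∈ S`, the nodes whose bags meet `S` form a subtree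
rooted at `r`. -/
def RootsAt (S : Set α) (r : Pos) (v : α) : Prop :=
  ∀ q ∈ t.dom, v ∈ t.bag q → r <+: q ∧ ∀ y, r <+: y → y <+: q → (t.bag y ∩ S).Nonempty

variable {t} {S : Set α} {r : Pos}

theorem rootsAt_of_mem_bag (hmin : ∀ q ∈ t.dom, (t.bag q ∩ S).Nonempty → r.length ≤ q.length)
    (hr : r ∈ t.dom) {u : α} (hu : u ∈ S) (hur : u ∈ t.bag r) : t.RootsAt S r u := by
  intro q hq huq
  have hm := t.inter_subset_bag_commonPrefix hr hq ⟨hur, huq⟩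
  have hrm : r <+: commonPrefix r q :=
    prefix_of_prefix_length_le (prefix_refl r) (commonPrefix_prefix_left r q)
      (hmin _ (t.dom_pc _ r (commonPrefix_prefix_left r q) hr) ⟨u, hm, hu⟩)
  exact ⟨hrm.trans (commonPrefix_prefix_right r q), fun y hry hyq =>
    ⟨u, t.inter_subset_bag_of_prefix hq hry hyq ⟨hur, huq⟩, hu⟩⟩

theorem RootsAt.of_linkedIn (hmin : ∀ q ∈ t.dom, (t.bag q ∩ S).Nonempty → r.length ≤ q.length)
    {u v : α} (hu : t.RootsAt S r u) (huv : linkedIn E S u v) : t.RootsAt S r v := by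
  obtain ⟨-, hv, he⟩ := huv
  obtain ⟨b, hb, hub, hvb⟩ : ∃ b ∈ t.dom, u ∈ t.bag b ∧ v ∈ t.bag b := by
    rcases he with he | he
    · exact t.cover_e _ he
    · obtain ⟨b, hb, hvb, hub⟩ := t.cover_e _ he
      exact ⟨b, hb, hub, hvb⟩
  obtain ⟨hrb, hbranch⟩ := hu b hb hub
  intro q hq hvq
  have hmb := commonPrefix_prefix_left b q
  have hmq := commonPrefix_prefix_right b q
  have hvm := t.inter_subset_bag_commonPrefix hb hq ⟨hvb, hvq⟩
  have hrm : r <+: commonPrefix b q :=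
    prefix_of_prefix_length_le hrb hmb (hmin _ (t.dom_pc _ b hmb hb) ⟨v, hvm, hv⟩)
  refine ⟨hrm.trans hmq, fun y hry hyq => ?_⟩
  rcases prefix_or_prefix_of_prefix hyq hmq with hym | hmy
  · exact hbranch y hry (hym.trans hmb)
  · exact ⟨v, t.inter_subset_bag_of_prefix hq hmy hyq ⟨hvm, hvq⟩, hv⟩

theorem exists_rootsAt (hS : IsConnectedIn E S) (hne : (S ∩ V).Nonempty) :
    ∃ r ∈ t.dom, ∀ v ∈ S, t.RootsAt S r v := by
  obtain ⟨u, huS, huV⟩ := hne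
  obtain ⟨p, hp, hup⟩ := t.cover_v u huV
  obtain ⟨r, ⟨hr, w, hwr, hwS⟩, hmin⟩ :=
    Set.exists_min_image {q | q ∈ t.dom ∧ (t.bag q ∩ S).Nonempty} length
      (t.dom_fin.subset fun _ h => h.1) ⟨p, hp, u, hup, huS⟩
  replace hmin : ∀ q ∈ t.dom, (t.bag q ∩ S).Nonempty → r.length ≤ q.length :=
    fun q hq h => hmin q ⟨hq, h⟩
  refine ⟨r, hr, fun v hv => ?_⟩
  induction hS w hwS v hv with
  | refl => exact rootsAt_of_mem_bag hmin hr hwS hwr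
  | tail _ hlink ih => exact (ih hlink.1).of_linkedIn hmin hlink

theorem exists_bag_meets_all {ι : Type*} [Nonempty ι] (S : ι → Set α) (hSV : ∀ i, S i ⊆ V)
    (hconn : ∀ i, IsConnectedIn E (S i)) (hmeet : ∀ i j, (S i ∩ S j).Nonempty) :
    ∃ p ∈ t.dom, ∀ i, (t.bag p ∩ S i).Nonempty := by
  have hne i : (S i ∩ V).Nonempty :=
    let ⟨v, hv, _⟩ := hmeet i i
    ⟨v, hv, hSV i hv⟩
  choose r hr hroot using fun i => t.exists_rootsAt (hconn i) (hne i)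
  obtain ⟨_, ⟨i₀, rfl⟩, hmax⟩ := Set.exists_max_image (Set.range r) length
    (t.dom_fin.subset (Set.range_subset_iff.mpr hr)) (Set.range_nonempty r)
  refine ⟨r i₀, hr i₀, fun j => ?_⟩
  obtain ⟨w, hw₀, hwj⟩ := hmeet i₀ j
  obtain ⟨x, hx, hwx⟩ := t.cover_v w (hSV j hwj)
  obtain ⟨h₀x, -⟩ := hroot i₀ w hw₀ x hx hwx
  obtain ⟨hjx, hbranch⟩ := hroot j w hwj x hx hwx
  exact hbranch (r i₀) (prefix_of_prefix_length_le hjx h₀x (hmax _ ⟨j, rfl⟩)) h₀x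

end TreeDecomp

def cross (n i : ℕ) : Set (ℕ × ℕ) := {v ∈ gridV n | v.1 = i ∨ v.2 = i}

variable {n i : ℕ}

theorem cross_subset_gridV : cross n i ⊆ gridV n := fun _ hv => hv.1

theorem reflTransGen_cross_row (hi : i < n) {a b : ℕ} (ha : a < n) (hb : b < n) :
    ReflTransGen (linkedIn (gridE n) (cross n i)) (i, a) (i, b) := by
  refine ReflTransGen.lift (fun j => (i, j)) (fun _ _ h => h) _ _
    (reflTransGen_of_succ _ (fun j hj => ?_) (fun j hj => ?_)) <;>
  · simp only [Set.mem_Ico, Order.succ_eq_add_one, linkedIn, cross, gridE, gridV,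
      Set.mem_ofPred_eq, true_or, true_and, or_true, and_true] at hj ⊢
    omega

theorem reflTransGen_cross_col (hi : i < n) {a b : ℕ} (ha : a < n) (hb : b < n) :
    ReflTransGen (linkedIn (gridE n) (cross n i)) (a, i) (b, i) := by
  refine ReflTransGen.lift (fun j => (j, i)) (fun _ _ h => h) _ _
    (reflTransGen_of_succ _ (fun j hj => ?_) (fun j hj => ?_)) <;>
  · simp only [Set.mem_Ico, Order.succ_eq_add_one, linkedIn, cross, gridE, gridV,
      Set.mem_ofPred_eq, true_or, or_true, and_true] at hj ⊢
    omega

theorem isConnectedIn_cross (hi : i < n) : IsConnectedIn (gridE n) (cross n i) := by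
  rintro ⟨a, b⟩ ⟨⟨ha, hb⟩, hu⟩ ⟨c, d⟩ ⟨⟨hc, hd⟩, hv⟩
  refine ReflTransGen.trans (b := (i, i)) ?_ ?_
  · rcases hu with rfl | rfl
    exacts [reflTransGen_cross_row ha hb ha, reflTransGen_cross_col hb ha hb]
  · rcases hv with rfl | rfl
    exacts [reflTransGen_cross_row hc hc hd, reflTransGen_cross_col hd hd hc]

theorem le_two_mul_ncard_of_coords {B : Set (ℕ × ℕ)} (hB : B.Finite)
    (h : ∀ i < n, ∃ v ∈ B, v.1 = i ∨ v.2 = i) : n ≤ 2 * B.ncard := by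
  have hsub : Finset.range n ⊆ hB.toFinset.image Prod.fst ∪ hB.toFinset.image Prod.snd := by
    intro i hi
    obtain ⟨v, hv, hvi | hvi⟩ := h i (Finset.mem_range.mp hi)
    · exact Finset.mem_union_left _ (Finset.mem_image.mpr ⟨v, hB.mem_toFinset.mpr hv, hvi⟩)
    · exact Finset.mem_union_right _ (Finset.mem_image.mpr ⟨v, hB.mem_toFinset.mpr hv, hvi⟩)
  calc n = (Finset.range n).card := (Finset.card_range n).symm
    _ ≤ (hB.toFinset.image Prod.fst ∪ hB.toFinset.image Prod.snd).card := Finset.card_le_card hsub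
    _ ≤ (hB.toFinset.image Prod.fst).card + (hB.toFinset.image Prod.snd).card :=
      Finset.card_union_le _ _
    _ ≤ hB.toFinset.card + hB.toFinset.card :=
      add_le_add Finset.card_image_le Finset.card_image_le
    _ = 2 * B.ncard := by rw [Set.ncard_eq_toFinset_card B hB]; ring

end SLTW

open SLTW in
/-- square grids do not have bounded tree width. -/
theorem grids_unbounded_treewidth :
    ∀ k : ℕ, ∃ n : ℕ, ¬ twLE (gridV n) (gridE n) k := by
  intro k
  refine ⟨2 * k + 3, fun ⟨t, ht⟩ => ?_⟩
  have : Nonempty (Fin (2 * k + 3)) := ⟨0⟩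
  obtain ⟨p, hp, hmeets⟩ := t.exists_bag_meets_all (fun i : Fin (2 * k + 3) => cross _ i)
    (fun _ => cross_subset_gridV) (fun i => isConnectedIn_cross i.2)
    (fun i j => ⟨(i, j), ⟨⟨i.2, j.2⟩, Or.inl rfl⟩, ⟨⟨i.2, j.2⟩, Or.inr rfl⟩⟩)
  obtain ⟨hfin, hcard⟩ := ht p hp
  have := le_two_mul_ncard_of_coords hfin fun i hi =>
    let ⟨v, hvp, _, hvi⟩ := hmeets ⟨i, hi⟩
    ⟨v, hvp, hvi⟩
  omega
end

section
/- Trees with linked leaves have bounded tree width: let T ⊆ {0,1}* be a finite prefix-closed binary tree in which every node has 0 or 2 children, and let G be the graph on T with the child edges {p, p.i} together with edges linking each leaf to the next leaf in left-to-right (lexicographic frontier) order. Then tw(G) ≤ 3. -/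
open SLTW in
/-- A leaf of the binary tree `T`. -/
def isLeaf (T : Set (List Bool)) (p : List Bool) : Prop := p ∈ T ∧ p ++ [false] ∉ T

/-!
The decomposition follows the tree. Write `L v = extremeLeaf T false v` and
`R v = extremeLeaf T true v` for the leftmost and rightmost leaf below `v`; two leaves are
consecutive exactly when they are `R (q0)` and `L (q1)` for an inner node `q`. Every node `v` gets
the bag `{v, L v, R v, R (v0)}`, and an inner node `v` three more: `{v, v0, L (v0), R (v0)}` above
`v0`, `{v, v1, L (v1), R (v1)}` above `v1`, and `{v, R v, R (v0), L (v1)}` between them, which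
covers the leaf edge at `v`. The decomposition nodes whose bag contains a given vertex form a
subtree: except for one topmost node (`IsApex`), the parent of each of them contains the vertex as
well, and in a tree this yields the path condition.
-/

namespace TreeLinkedLeaves

open SLTW List

section Paths

variable {D S : Set Pos} {l : List Pos} {a p q r x y z : Pos}

lemma adj_comm : adj x y ↔ adj y x := Or.comm

lemma prefix_of_adj (hzx : z <+: x) (hne : z ≠ x) (h : adj x y) : z <+: y := by
  rcases h with ⟨i, rfl⟩ | ⟨i, rfl⟩
  · exact hzx.trans (prefix_append _ _)
  · exact (prefix_concat_iff.1 hzx).resolve_left hne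

lemma mem_of_isChain_adj (hl : l.IsChain adj) (hp : l.head? = some p)
    (hr : l.getLast? = some r) (hzp : z <+: p) (hzr : ¬ z <+: r) : z ∈ l := by
  induction l generalizing p with
  | nil => simp at hp
  | cons b t ih =>
    obtain rfl : b = p := by simpa using hp
    by_cases hzb : z = b
    · exact hzb ▸ mem_cons_self
    cases t with
    | nil => exact absurd (by simpa using hr : b = r) fun h => hzr (h ▸ hzp)
    | cons c t =>
      have hl := isChain_cons_cons.1 hl
      exact mem_cons_of_mem _ (ih hl.2 rfl (by simpa using hr) (prefix_of_adj hzp hzb hl.1))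

lemma mem_of_isChain_adj' (hl : l.IsChain adj) (hp : l.head? = some p)
    (hr : l.getLast? = some r) (hzr : z <+: r) (hzp : ¬ z <+: p) : z ∈ l := by
  have hrev : l.reverse.IsChain adj := isChain_reverse.2 (hl.imp fun _ _ h => adj_comm.1 h)
  simpa using mem_of_isChain_adj hrev (by rwa [head?_reverse]) (by rwa [getLast?_reverse]) hzr hzp

lemma exists_eq_append_of_isChain_adj {t : List Pos} (hl : (q :: y :: t).IsChain adj)
    (hq : q ∉ y :: t) (hr : (y :: t).getLast? = some r) (hqr : ¬ q <+: r) :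
    ∃ i, q = y ++ [i] := by
  obtain ⟨hqy | hqy, hl⟩ := isChain_cons_cons.1 hl
  · obtain ⟨i, rfl⟩ := hqy
    exact absurd (mem_of_isChain_adj hl rfl hr (prefix_append _ _) hqr) hq
  · exact hqy

lemma prefix_or_prefix_of_mem_path (hl : isPath D l p r) (hq : q ∈ l) : q <+: p ∨ q <+: r := by
  obtain ⟨-, hch, hnd, -, hp, hr⟩ := hl
  by_contra! h
  obtain ⟨s, t, rfl⟩ := append_of_mem hq
  obtain ⟨-, hndt, hdisj⟩ := nodup_append.1 hnd
  obtain _ | ⟨y, t⟩ := t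
  · exact h.2 (by simp at hr; rw [hr])
  obtain rfl | ⟨s, x, rfl⟩ := eq_nil_or_concat' s
  · exact h.1 (by simp at hp; rw [hp])
  obtain ⟨i, hi⟩ := exists_eq_append_of_isChain_adj hch.right_of_append (nodup_cons.1 hndt).1
    (by simpa using hr) h.2
  have hback : (q :: x :: s.reverse).IsChain adj := by
    have := isChain_reverse.2 (hch.imp fun _ _ h => adj_comm.1 h)
    simp only [reverse_append, reverse_cons, append_assoc, cons_append, nil_append] at this
    exact (isChain_cons_cons.1 this.right_of_append).2
  obtain ⟨j, hj⟩ := exists_eq_append_of_isChain_adj hback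
    (fun h => hdisj q (by simpa [or_comm] using h) q mem_cons_self rfl)
    (by simp at hp; rw [getLast?_cons, getLast?_reverse, hp]) h.1
  exact hdisj x (by simp) y (by simp) (append_inj' (hj.symm.trans hi) rfl).1

lemma prefix_of_mem_path (hl : isPath D l p r) (hzp : z <+: p) (hzr : z <+: r) (hq : q ∈ l) :
    z <+: q := by
  obtain ⟨-, hch, hnd, -, hp, hr⟩ := hl
  by_contra hzq
  obtain ⟨s, t, rfl⟩ := append_of_mem hq
  have hzs : z ∈ s ++ [q] := by
    rw [append_cons] at hch
    exact mem_of_isChain_adj hch.left_of_append (by simpa using hp) (by simp) hzp hzq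
  have hzt : z ∈ q :: t :=
    mem_of_isChain_adj' hch.right_of_append rfl (by simpa using hr) hzr hzq
  have hzq' : z ≠ q := fun h => hzq (h ▸ prefix_refl _)
  exact (nodup_append.1 hnd).2.2 z (by simpa [hzq'] using hzs) z hzt rfl

def IsRootedAt (S : Set Pos) (a : Pos) : Prop :=
  ∀ x ∈ S, x = a ∨ (x ≠ [] ∧ x.dropLast ∈ S)

lemma IsRootedAt.prefix_of_mem (h : IsRootedAt S a) (hx : x ∈ S) : a <+: x := by
  induction x using reverseRecOn with
  | nil =>
    obtain rfl | ⟨hne, -⟩ := h [] hx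
    · exact prefix_refl _
    · exact absurd rfl hne
  | append_singleton x b ih =>
    obtain rfl | ⟨-, hd⟩ := h _ hx
    · exact prefix_refl _
    · rw [dropLast_concat] at hd
      exact (ih hd).trans (prefix_append _ _)

lemma IsRootedAt.mem_of_prefix (h : IsRootedAt S a) (hx : x ∈ S) (hay : a <+: y)
    (hyx : y <+: x) : y ∈ S := by
  induction x using reverseRecOn with
  | nil => rwa [prefix_nil.1 hyx]
  | append_singleton x b ih =>
    obtain rfl | hyx := prefix_concat_iff.1 hyx
    · exact hx
    obtain rfl | ⟨-, hd⟩ := h _ hx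
    · exact absurd (hay.length_le.trans hyx.length_le) (by simp)
    · rw [dropLast_concat] at hd
      exact ih hd hyx

lemma IsRootedAt.mem_of_onPath (h : IsRootedAt S a) (hq : onPath D q p r) (hp : p ∈ S)
    (hr : r ∈ S) : q ∈ S := by
  obtain ⟨l, hl, hql⟩ := hq
  have haq := prefix_of_mem_path hl (h.prefix_of_mem hp) (h.prefix_of_mem hr) hql
  rcases prefix_or_prefix_of_mem_path hl hql with hqp | hqr
  · exact h.mem_of_prefix hp haq hqp
  · exact h.mem_of_prefix hr haq hqr

lemma exists_isRootedAt {R : Set Pos} (hR : R.Subsingleton)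
    (h : ∀ x ∈ S, x ∈ R ∨ (x ≠ [] ∧ x.dropLast ∈ S)) : ∃ a, IsRootedAt S a := by
  by_cases hne : R.Nonempty
  · obtain ⟨a, ha⟩ := hne
    exact ⟨a, fun x hx => (h x hx).imp_left fun hxR => hR hxR ha⟩
  · exact ⟨[], fun x hx => Or.inr <| (h x hx).resolve_left fun hxR => hne ⟨x, hxR⟩⟩

lemma prefixClosed_of_dropLast_mem (h : ∀ p ∈ D, p.dropLast ∈ D) : prefixClosed D := by
  intro p q hpq hq
  induction q using reverseRecOn with
  | nil => rwa [prefix_nil.1 hpq]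
  | append_singleton q b ih =>
    obtain rfl | hpq := prefix_concat_iff.1 hpq
    · exact hq
    · exact ih hpq (by simpa using h _ hq)

end Paths

section Runs

variable {α : Type*} {a b c : α}

lemma eq_of_append_cons_replicate_eq (hab : a ≠ b) {v w : List α} {m n : ℕ}
    (h : v ++ a :: replicate m b = w ++ a :: replicate n b) : v = w := by
  have key : ∀ {m n : ℕ} {w : List α}, replicate m b ≠ w ++ a :: replicate n b := fun h =>
    hab (eq_of_mem_replicate (h ▸ mem_append_right _ mem_cons_self))
  induction v generalizing w with
  | nil =>
    cases w with
    | nil => rfl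
    | cons c w =>
      simp only [nil_append, cons_append, cons.injEq] at h
      exact absurd h.2 key
  | cons c v ih =>
    cases w with
    | nil =>
      simp only [nil_append, cons_append, cons.injEq] at h
      exact absurd h.2.symm key
    | cons d w =>
      simp only [cons_append, cons.injEq] at h
      rw [h.1, ih h.2]

lemma replicate_ne_append_cons_replicate (hab : a ≠ b) (v : List α) (m n : ℕ) :
    replicate m c ≠ v ++ a :: replicate (n + 1) b := fun h =>
  hab ((eq_of_mem_replicate (h ▸ by simp : a ∈ replicate m c)).trans
    (eq_of_mem_replicate (h ▸ by simp : b ∈ replicate m c)).symm)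

lemma append_cons_replicate_ne (hab : a ≠ b) (v w : List α) (m n : ℕ) :
    v ++ a :: replicate (m + 1) b ≠ w ++ b :: replicate (n + 1) a := by
  intro h
  rw [replicate_succ', replicate_succ', ← cons_append, ← cons_append, ← append_assoc,
    ← append_assoc] at h
  have hba : [b] = [a] := (append_inj' h rfl).2
  exact hab (head_eq_of_cons_eq hba).symm

end Runs

structure IsFullBinaryTree (T : Set (List Bool)) : Prop where
  prefix_mem : ∀ p q : List Bool, p <+: q → q ∈ T → p ∈ T
  append_false_mem_iff : ∀ p ∈ T, (p ++ [false] ∈ T ↔ p ++ [true] ∈ T)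

def extremeLeaf (T : Set (List Bool)) (b : Bool) (v : List Bool) : Set (List Bool) :=
  {x | isLeaf T x ∧ ∃ k, x = v ++ replicate k b}

section Leaves

variable {T : Set (List Bool)} {v w x y : List Bool} {b c : Bool}

namespace IsFullBinaryTree

variable (hT : IsFullBinaryTree T)
include hT

lemma mem_of_append_mem (h : v ++ w ∈ T) : v ∈ T :=
  hT.prefix_mem _ _ (prefix_append _ _) h

lemma append_mem_iff (hv : v ∈ T) : v ++ [b] ∈ T ↔ v ++ [false] ∈ T := by
  cases b
  · rfl
  · exact (hT.append_false_mem_iff v hv).symm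

lemma append_false_mem (h : v ++ [b] ∈ T) : v ++ [false] ∈ T :=
  (hT.append_mem_iff (hT.mem_of_append_mem h)).1 h

lemma eq_of_isLeaf_of_prefix (hv : isLeaf T v) (hvx : v <+: x) (hx : x ∈ T) : x = v := by
  obtain ⟨_ | ⟨b, t⟩, rfl⟩ := hvx
  · simp
  · exact absurd (hT.append_false_mem (hT.prefix_mem (v ++ [b]) _ ⟨t, by simp⟩ hx)) hv.2

lemma extremeLeaf_subsingleton : (extremeLeaf T b v).Subsingleton := by
  have key : ∀ {j k}, j ≤ k → v ++ replicate j b <+: v ++ replicate k b := fun hjk =>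
    (prefix_append_right_inj v).2
      ⟨replicate (_ - _) b, by rw [← replicate_add, Nat.add_sub_cancel' hjk]⟩
  rintro _ ⟨hx, j, rfl⟩ _ ⟨hy, k, rfl⟩
  rcases le_total j k with h | h
  · exact (hT.eq_of_isLeaf_of_prefix hx (key h) hy.1).symm
  · exact hT.eq_of_isLeaf_of_prefix hy (key h) hx.1

lemma exists_mem_extremeLeaf (hfin : T.Finite) (hv : v ∈ T) (b : Bool) :
    ∃ x, x ∈ extremeLeaf T b v := by
  classical
  have hex : ∃ k, v ++ replicate k b ∉ T := by
    by_contra! h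
    exact Set.infinite_of_injective_forall_mem
      (fun i j hij => by simpa using congrArg length hij) h hfin
  have hpos : Nat.find hex ≠ 0 := fun h0 => Nat.find_spec hex (by rw [h0]; simpa using hv)
  obtain ⟨k, hk⟩ := Nat.exists_eq_succ_of_ne_zero hpos
  have hmem : v ++ replicate k b ∈ T := by simpa using Nat.find_min hex (hk ▸ k.lt_succ_self)
  refine ⟨_, ⟨hmem, fun h => Nat.find_spec hex ?_⟩, k, rfl⟩
  rw [hk, replicate_succ', ← append_assoc]
  exact (hT.append_mem_iff hmem).2 h

end IsFullBinaryTree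

lemma prefix_of_mem_extremeLeaf (hx : x ∈ extremeLeaf T b v) : v <+: x := by
  obtain ⟨-, k, rfl⟩ := hx
  exact prefix_append _ _

lemma extremeLeaf_append_subset : extremeLeaf T b (v ++ [b]) ⊆ extremeLeaf T b v := by
  rintro x ⟨hx, k, rfl⟩
  exact ⟨hx, k + 1, by simp [replicate_succ]⟩

lemma append_mem_extremeLeaf (h : isLeaf T (v ++ [b])) : v ++ [b] ∈ extremeLeaf T b v :=
  extremeLeaf_append_subset ⟨h, 0, by simp⟩

lemma eq_or_exists_of_mem_extremeLeaf_append (hx : x ∈ extremeLeaf T b (v ++ [c])) :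
    x = v ++ [c] ∨ ∃ k, x = v ++ c :: replicate (k + 1) b := by
  obtain ⟨-, _ | k, rfl⟩ := hx
  · simp
  · exact Or.inr ⟨k, by simp⟩

lemma prefix_or_exists_of_lt (h : x < y) :
    x <+: y ∨ ∃ c s t, x = c ++ false :: s ∧ y = c ++ true :: t := by
  induction h with
  | nil => exact Or.inl nil_prefix
  | @rel a s b t hab =>
    obtain ⟨rfl, rfl⟩ : a = false ∧ b = true := by revert hab; cases a <;> cases b <;> decide
    exact Or.inr ⟨[], s, t, rfl, rfl⟩
  | @cons a s t _ ih =>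
    rcases ih with h | ⟨c, s, t, rfl, rfl⟩
    · exact Or.inl (cons_prefix_cons.2 ⟨rfl, h⟩)
    · exact Or.inr ⟨a :: c, s, t, rfl, rfl⟩

lemma lt_of_prefix_of_prefix (hx : v ++ [false] <+: x) (hy : v ++ [true] <+: y) : x < y := by
  obtain ⟨s, rfl⟩ := hx
  obtain ⟨t, rfl⟩ := hy
  simpa using Lex.append_left _ (Lex.rel (by decide : false < true)) v

lemma prefix_or_lt_replicate_true : ∀ (n : ℕ) (s : List Bool),
    s <+: replicate n true ∨ replicate n true <+: s ∨ s < replicate n true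
  | 0, _ => Or.inr (Or.inl nil_prefix)
  | _ + 1, [] => Or.inl nil_prefix
  | _ + 1, false :: _ => Or.inr (Or.inr (Lex.rel (by decide)))
  | n + 1, true :: s => by
    rcases prefix_or_lt_replicate_true n s with h | h | h
    · exact Or.inl (cons_prefix_cons.2 ⟨rfl, h⟩)
    · exact Or.inr (Or.inl (cons_prefix_cons.2 ⟨rfl, h⟩))
    · exact Or.inr (Or.inr (Lex.cons h))

lemma prefix_or_replicate_false_lt : ∀ (n : ℕ) (s : List Bool),
    s <+: replicate n false ∨ replicate n false <+: s ∨ replicate n false < s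
  | 0, _ => Or.inr (Or.inl nil_prefix)
  | _ + 1, [] => Or.inl nil_prefix
  | _ + 1, true :: _ => Or.inr (Or.inr (Lex.rel (by decide)))
  | n + 1, false :: s => by
    rcases prefix_or_replicate_false_lt n s with h | h | h
    · exact Or.inl (cons_prefix_cons.2 ⟨rfl, h⟩)
    · exact Or.inr (Or.inl (cons_prefix_cons.2 ⟨rfl, h⟩))
    · exact Or.inr (Or.inr (Lex.cons h))

namespace IsFullBinaryTree

variable (hT : IsFullBinaryTree T)
include hT

lemma le_of_mem_extremeLeaf_true (hx : isLeaf T x) (hvx : v <+: x)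
    (hy : y ∈ extremeLeaf T true v) : x ≤ y := by
  obtain ⟨s, rfl⟩ := hvx
  obtain ⟨hy, n, rfl⟩ := hy
  rcases prefix_or_lt_replicate_true n s with h | h | h
  · exact (hT.eq_of_isLeaf_of_prefix hx ((prefix_append_right_inj v).2 h) hy.1).ge
  · exact (hT.eq_of_isLeaf_of_prefix hy ((prefix_append_right_inj v).2 h) hx.1).le
  · exact le_of_lt (Lex.append_left _ h v)

lemma le_of_mem_extremeLeaf_false (hx : isLeaf T x) (hvx : v <+: x)
    (hy : y ∈ extremeLeaf T false v) : y ≤ x := by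
  obtain ⟨s, rfl⟩ := hvx
  obtain ⟨hy, n, rfl⟩ := hy
  rcases prefix_or_replicate_false_lt n s with h | h | h
  · exact (hT.eq_of_isLeaf_of_prefix hx ((prefix_append_right_inj v).2 h) hy.1).le
  · exact (hT.eq_of_isLeaf_of_prefix hy ((prefix_append_right_inj v).2 h) hx.1).ge
  · exact le_of_lt (Lex.append_left _ h v)

lemma exists_of_consecutive_leaves (hfin : T.Finite) (hx : isLeaf T x) (hy : isLeaf T y)
    (hxy : x < y) (hbet : ¬ ∃ r, isLeaf T r ∧ x < r ∧ r < y) :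
    ∃ q, q ++ [false] ∈ T ∧ x ∈ extremeLeaf T true (q ++ [false]) ∧
      y ∈ extremeLeaf T false (q ++ [true]) := by
  obtain hp | ⟨q, s, t, rfl, rfl⟩ := prefix_or_exists_of_lt hxy
  · exact absurd (hT.eq_of_isLeaf_of_prefix hx hp hy.1 ▸ hxy) (lt_irrefl _)
  have hq0 : q ++ [false] <+: q ++ false :: s := ⟨s, by simp⟩
  have hq1 : q ++ [true] <+: q ++ true :: t := ⟨t, by simp⟩
  refine ⟨q, hT.prefix_mem _ _ hq0 hx.1, ?_, ?_⟩
  · obtain ⟨r, hr⟩ := hT.exists_mem_extremeLeaf hfin (hT.prefix_mem _ _ hq0 hx.1) true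
    obtain h | h := (hT.le_of_mem_extremeLeaf_true hx hq0 hr).eq_or_lt
    · exact h ▸ hr
    · exact absurd ⟨r, hr.1, h, lt_of_prefix_of_prefix (prefix_of_mem_extremeLeaf hr) hq1⟩ hbet
  · obtain ⟨r, hr⟩ := hT.exists_mem_extremeLeaf hfin (hT.prefix_mem _ _ hq1 hy.1) false
    obtain h | h := (hT.le_of_mem_extremeLeaf_false hy hq1 hr).eq_or_lt
    · exact h ▸ hr
    · exact absurd ⟨r, hr.1, lt_of_prefix_of_prefix hq0 (prefix_of_mem_extremeLeaf hr), h⟩ hbet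

end IsFullBinaryTree

end Leaves

inductive Kind
  | node
  | left
  | link
  | right

def code : Bool → List ℕ
  | false => [0, 0]
  | true => [1, 0, 0]

def enc (v : List Bool) : Pos := v.flatMap code

def Kind.suffix : Kind → List ℕ
  | .node => []
  | .left => [0]
  | .link => [1]
  | .right => [1, 0]

/-- Position of a node of the decomposition tree. Below `pos v .node` hang `pos v .left`, whose
child is `pos (v ++ [false]) .node`, and `pos v .link`, whose child `pos v .right` is the parent
of `pos (v ++ [true]) .node`. -/
def pos (v : List Bool) (k : Kind) : Pos := enc v ++ k.suffix

def Kind.ofChild : Bool → Kind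
  | false => .left
  | true => .right

def IsDecompNode (T : Set (List Bool)) (v : List Bool) : Kind → Prop
  | .node => v ∈ T
  | _ => v ++ [false] ∈ T

def bagOf (T : Set (List Bool)) (v : List Bool) : Kind → Set (List Bool)
  | .node => {v} ∪ extremeLeaf T false v ∪ extremeLeaf T true v ∪
      extremeLeaf T true (v ++ [false])
  | .left => {v} ∪ {v ++ [false]} ∪ extremeLeaf T false (v ++ [false]) ∪
      extremeLeaf T true (v ++ [false])
  | .link => {v} ∪ extremeLeaf T true v ∪ extremeLeaf T true (v ++ [false]) ∪
      extremeLeaf T false (v ++ [true])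
  | .right => {v} ∪ {v ++ [true]} ∪ extremeLeaf T false (v ++ [true]) ∪
      extremeLeaf T true (v ++ [true])

def decompDom (T : Set (List Bool)) : Set Pos :=
  {p | ∃ v k, IsDecompNode T v k ∧ pos v k = p}

def decompBag (T : Set (List Bool)) (p : Pos) : Set (List Bool) :=
  {x | ∃ v k, IsDecompNode T v k ∧ pos v k = p ∧ x ∈ bagOf T v k}

/-- `IsApex T u p`: `p` is the topmost decomposition node whose bag contains `u`. -/
inductive IsApex (T : Set (List Bool)) (u : List Bool) : Pos → Prop
  | internal : u ++ [false] ∈ T → IsApex T u (pos u .node).dropLast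
  | replicate (b : Bool) (n : ℕ) : isLeaf T u → u = replicate n b → IsApex T u (pos [] .node)
  | rightRun (v : List Bool) (k : ℕ) :
      isLeaf T u → u = v ++ false :: replicate (k + 1) true → IsApex T u (pos v .node)
  | leftRun (v : List Bool) (k : ℕ) :
      isLeaf T u → u = v ++ true :: replicate (k + 1) false → IsApex T u (pos v .link)

variable {T : Set (List Bool)} {u v x : List Bool} {b : Bool} {k : Kind} {p : Pos}

lemma pos_injective {v' : List Bool} {k' : Kind} (h : pos v k = pos v' k') : v = v' ∧ k = k' := by
  induction v generalizing v' with
  | nil =>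
    cases v' with
    | nil => cases k <;> cases k' <;> simp_all [pos, enc, Kind.suffix]
    | cons b v' => cases b <;> cases k <;> simp [pos, enc, code, Kind.suffix] at h
  | cons b v ih =>
    cases v' with
    | nil => cases b <;> cases k' <;> simp [pos, enc, code, Kind.suffix] at h
    | cons b' v' =>
      cases b <;> cases b' <;> simp [pos, enc, code] at h ⊢ <;> exact ih h

@[simp] lemma dropLast_pos_left : (pos v .left).dropLast = pos v .node := by
  simp [pos, Kind.suffix]

@[simp] lemma dropLast_pos_link : (pos v .link).dropLast = pos v .node := by
  simp [pos, Kind.suffix]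

@[simp] lemma dropLast_pos_right : (pos v .right).dropLast = pos v .link := by
  simp [pos, Kind.suffix]

lemma dropLast_pos_append_node : (pos (v ++ [b]) .node).dropLast = pos v (Kind.ofChild b) := by
  cases b <;> simp [pos, enc, code, Kind.suffix, Kind.ofChild]

lemma pos_append_node_ne_nil : pos (v ++ [b]) .node ≠ [] := by
  cases b <;> simp [pos, enc, code]

lemma IsApex.unique {p' : Pos} (h : IsApex T u p) (h' : IsApex T u p') : p = p' := by
  -- distinct constructors are told apart by leafness, by the letters of `u`, or by its last letter
  rcases h with hi | ⟨b, n, hl, rfl⟩ | ⟨v, k, hl, rfl⟩ | ⟨v, k, hl, rfl⟩ <;>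
  rcases h' with hi' | ⟨b', n', hl', h'⟩ | ⟨v', k', hl', h'⟩ | ⟨v', k', hl', h'⟩
  all_goals first
    | rfl
    | exact absurd hi hl'.2
    | exact absurd hi' hl.2
    | exact absurd h' (replicate_ne_append_cons_replicate (by decide) _ _ _)
    | exact absurd h'.symm (replicate_ne_append_cons_replicate (by decide) _ _ _)
    | exact absurd h' (append_cons_replicate_ne (by decide) _ _ _ _)
    | rw [eq_of_append_cons_replicate_eq (by decide) h']

lemma mem_decompBag_pos (hv : IsDecompNode T v k) :
    x ∈ decompBag T (pos v k) ↔ x ∈ bagOf T v k :=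
  ⟨fun ⟨_, _, _, h, hx⟩ => by obtain ⟨rfl, rfl⟩ := pos_injective h; exact hx,
    fun hx => ⟨v, k, hv, rfl, hx⟩⟩

lemma decompBag_pos (hv : IsDecompNode T v k) : decompBag T (pos v k) = bagOf T v k :=
  Set.ext fun _ => mem_decompBag_pos hv

lemma IsFullBinaryTree.isDecompNode_ofChild (hT : IsFullBinaryTree T) (h : v ++ [b] ∈ T) :
    IsDecompNode T v (Kind.ofChild b) := by
  cases b <;> exact hT.append_false_mem h

lemma isApex_or_mem_extremeLeaf_of_append_mem (h : v ++ [b] ∈ T) :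
    IsApex T (v ++ [b]) (pos v (Kind.ofChild b)) ∨ v ++ [b] ∈ extremeLeaf T b v := by
  by_cases hi : v ++ [b] ++ [false] ∈ T
  · exact Or.inl (dropLast_pos_append_node ▸ .internal hi)
  · exact Or.inr (append_mem_extremeLeaf ⟨h, hi⟩)

lemma isApex_of_mem_bagOf_nil (h : [] ∈ T) (hu : u ∈ bagOf T [] .node) :
    IsApex T u (pos [] .node) := by
  rcases hu with ((rfl | ⟨hu, k, rfl⟩) | ⟨hu, k, rfl⟩) | hu
  · by_cases hi : [] ++ [false] ∈ T
    · exact .internal hi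
    · exact .replicate false 0 ⟨h, hi⟩ rfl
  · exact .replicate false k hu (nil_append _)
  · exact .replicate true k hu (nil_append _)
  · obtain rfl | ⟨k, rfl⟩ := eq_or_exists_of_mem_extremeLeaf_append hu
    · exact .replicate false 1 hu.1 rfl
    · exact .rightRun [] k hu.1 rfl

lemma isApex_or_mem_bagOf_ofChild (hu : u ∈ bagOf T (v ++ [b]) .node) :
    IsApex T u (pos (v ++ [b]) .node) ∨ u ∈ bagOf T v (Kind.ofChild b) := by
  have key : u ∈ {v ++ [b]} ∪ extremeLeaf T false (v ++ [b]) ∪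
      extremeLeaf T true (v ++ [b]) → u ∈ bagOf T v (Kind.ofChild b) := by
    cases b <;> simp only [bagOf, Kind.ofChild, Set.mem_union] <;> tauto
  rcases hu with hu | hu
  · exact Or.inr (key hu)
  · obtain rfl | ⟨k, rfl⟩ := eq_or_exists_of_mem_extremeLeaf_append hu
    · exact Or.inr (key (Or.inl (Or.inr (append_mem_extremeLeaf hu.1))))
    · exact Or.inl (.rightRun _ k hu.1 rfl)

lemma isApex_or_mem_bagOf_node_of_left (hv : v ++ [false] ∈ T) (hu : u ∈ bagOf T v .left) :
    IsApex T u (pos v .left) ∨ u ∈ bagOf T v .node := by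
  rcases hu with ((rfl | rfl) | hu) | hu
  · simp [bagOf]
  · exact (isApex_or_mem_extremeLeaf_of_append_mem hv).imp id fun h => by simp [bagOf, h]
  · simp [bagOf, extremeLeaf_append_subset hu]
  · simp [bagOf, hu]

lemma isApex_or_mem_bagOf_node_of_link (hu : u ∈ bagOf T v .link) :
    IsApex T u (pos v .link) ∨ u ∈ bagOf T v .node := by
  rcases hu with ((rfl | hu) | hu) | hu
  · simp [bagOf]
  · simp [bagOf, hu]
  · simp [bagOf, hu]
  · obtain rfl | ⟨k, rfl⟩ := eq_or_exists_of_mem_extremeLeaf_append hu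
    · simp [bagOf, append_mem_extremeLeaf hu.1]
    · exact Or.inl (.leftRun v k hu.1 rfl)

lemma IsFullBinaryTree.isApex_or_mem_bagOf_link_of_right (hT : IsFullBinaryTree T)
    (hv : v ++ [false] ∈ T) (hu : u ∈ bagOf T v .right) :
    IsApex T u (pos v .right) ∨ u ∈ bagOf T v .link := by
  rcases hu with ((rfl | rfl) | hu) | hu
  · simp [bagOf]
  · have h1 : v ++ [true] ∈ T := (hT.append_mem_iff (hT.mem_of_append_mem hv)).2 hv
    exact (isApex_or_mem_extremeLeaf_of_append_mem h1).imp id fun h => by simp [bagOf, h]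
  · simp [bagOf, hu]
  · simp [bagOf, extremeLeaf_append_subset hu]

namespace IsFullBinaryTree

variable (hT : IsFullBinaryTree T)
include hT

lemma isApex_or_dropLast_mem (hu : u ∈ decompBag T p) :
    IsApex T u p ∨ (p ≠ [] ∧ u ∈ decompBag T p.dropLast) := by
  obtain ⟨v, k, hv, rfl, hu⟩ := hu
  cases k with
  | node =>
    obtain rfl | ⟨w, b, rfl⟩ := eq_nil_or_concat' v
    · exact Or.inl (isApex_of_mem_bagOf_nil hv hu)
    · refine (isApex_or_mem_bagOf_ofChild hu).imp_right fun h => ⟨pos_append_node_ne_nil, ?_⟩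
      rw [dropLast_pos_append_node]
      exact (mem_decompBag_pos (hT.isDecompNode_ofChild hv)).2 h
  | left =>
    refine (isApex_or_mem_bagOf_node_of_left hv hu).imp_right fun h =>
      ⟨by simp [pos, Kind.suffix], ?_⟩
    rw [dropLast_pos_left]
    exact (mem_decompBag_pos (k := .node) (hT.mem_of_append_mem hv)).2 h
  | link =>
    refine (isApex_or_mem_bagOf_node_of_link hu).imp_right fun h =>
      ⟨by simp [pos, Kind.suffix], ?_⟩
    rw [dropLast_pos_link]
    exact (mem_decompBag_pos (k := .node) (hT.mem_of_append_mem hv)).2 h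
  | right =>
    refine (hT.isApex_or_mem_bagOf_link_of_right hv hu).imp_right fun h =>
      ⟨by simp [pos, Kind.suffix], ?_⟩
    rw [dropLast_pos_right]
    exact (mem_decompBag_pos (k := .link) hv).2 h

lemma dropLast_mem_decompDom (hp : p ∈ decompDom T) : p.dropLast ∈ decompDom T := by
  obtain ⟨v, k, hv, rfl⟩ := hp
  cases k with
  | node =>
    obtain rfl | ⟨w, b, rfl⟩ := eq_nil_or_concat' v
    · exact ⟨[], .node, hv, rfl⟩
    · exact ⟨w, _, hT.isDecompNode_ofChild hv, dropLast_pos_append_node.symm⟩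
  | left => exact ⟨v, .node, hT.mem_of_append_mem hv, dropLast_pos_left.symm⟩
  | link => exact ⟨v, .node, hT.mem_of_append_mem hv, dropLast_pos_link.symm⟩
  | right => exact ⟨v, .link, hv, dropLast_pos_right.symm⟩

lemma decompDom_finite (hfin : T.Finite) : (decompDom T).Finite := by
  refine (hfin.biUnion fun v _ => Set.toFinite {pos v .node, pos v .left, pos v .link,
    pos v .right}).subset ?_
  rintro _ ⟨v, k, hv, rfl⟩
  refine Set.mem_biUnion (x := v) ?_ (by cases k <;> simp)
  cases k
  exacts [hv, hT.mem_of_append_mem hv, hT.mem_of_append_mem hv, hT.mem_of_append_mem hv]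

end IsFullBinaryTree

lemma finite_and_ncard_le_four {α : Type*} {A B C D : Set α} (hA : A.Subsingleton)
    (hB : B.Subsingleton) (hC : C.Subsingleton) (hD : D.Subsingleton) :
    (A ∪ B ∪ C ∪ D).Finite ∧ (A ∪ B ∪ C ∪ D).ncard ≤ 4 := by
  have h1 : ∀ s : Set α, s.Subsingleton → s.ncard ≤ 1 := fun s hs =>
    (Set.ncard_le_one hs.finite).2 fun _ ha _ hb => hs ha hb
  refine ⟨((hA.finite.union hB.finite).union hC.finite).union hD.finite, ?_⟩
  calc (A ∪ B ∪ C ∪ D).ncard ≤ A.ncard + B.ncard + C.ncard + D.ncard := by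
        grw [Set.ncard_union_le, Set.ncard_union_le, Set.ncard_union_le]
    _ ≤ 4 := by linarith [h1 A hA, h1 B hB, h1 C hC, h1 D hD]

lemma IsFullBinaryTree.finite_and_ncard_bagOf_le (hT : IsFullBinaryTree T) :
    (bagOf T v k).Finite ∧ (bagOf T v k).ncard ≤ 4 := by
  cases k <;> exact finite_and_ncard_le_four (Set.subsingleton_singleton)
    (by first | exact Set.subsingleton_singleton | exact hT.extremeLeaf_subsingleton)
    hT.extremeLeaf_subsingleton hT.extremeLeaf_subsingleton

def linkedLeavesEdges (T : Set (List Bool)) : Set (List Bool × List Bool) :=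
  {e | ∃ i : Bool, e.2 = e.1 ++ [i] ∧ e.2 ∈ T ∧ e.1 ∈ T} ∪
    {e | isLeaf T e.1 ∧ isLeaf T e.2 ∧ List.Lex (· < ·) e.1 e.2 ∧
      ¬ ∃ r, isLeaf T r ∧ List.Lex (· < ·) e.1 r ∧ List.Lex (· < ·) r e.2}

lemma IsFullBinaryTree.exists_mem_decompBag_of_mem_edges (hT : IsFullBinaryTree T)
    (hfin : T.Finite) {e : List Bool × List Bool} (he : e ∈ linkedLeavesEdges T) :
    ∃ p ∈ decompDom T, e.1 ∈ decompBag T p ∧ e.2 ∈ decompBag T p := by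
  rcases he with ⟨b, he, heT, -⟩ | ⟨hl₁, hl₂, hlt, hbet⟩
  · have hv := hT.isDecompNode_ofChild (he ▸ heT)
    refine ⟨_, ⟨_, _, hv, rfl⟩, (mem_decompBag_pos hv).2 ?_, (mem_decompBag_pos hv).2 ?_⟩
    all_goals cases b <;> simp [bagOf, Kind.ofChild, he]
  · obtain ⟨q, hq, h₁, h₂⟩ := hT.exists_of_consecutive_leaves hfin hl₁ hl₂ hlt hbet
    have hbag := decompBag_pos (k := .link) hq
    exact ⟨pos q .link, ⟨q, .link, hq, rfl⟩, hbag ▸ by simp [bagOf, h₁],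
      hbag ▸ by simp [bagOf, h₂]⟩

def linkedLeavesDecomp (hfin : T.Finite) (hT : IsFullBinaryTree T) :
    TreeDecomp T (linkedLeavesEdges T) where
  dom := decompDom T
  bag := decompBag T
  dom_fin := hT.decompDom_finite hfin
  dom_pc := prefixClosed_of_dropLast_mem fun _ => hT.dropLast_mem_decompDom
  cover_v v hv := ⟨pos v .node, ⟨v, .node, hv, rfl⟩,
    (mem_decompBag_pos (k := .node) hv).2 (by simp [bagOf])⟩
  cover_e _ := hT.exists_mem_decompBag_of_mem_edges hfin
  conn _ _ _ _ _ _ hq u hu := by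
    obtain ⟨a, ha⟩ := exists_isRootedAt (S := {p | u ∈ decompBag T p})
      (fun _ h _ h' => IsApex.unique h h') fun _ => hT.isApex_or_dropLast_mem
    exact ha.mem_of_onPath hq hu.1 hu.2

lemma twLE_linkedLeavesEdges (hfin : T.Finite) (hT : IsFullBinaryTree T) :
    twLE T (linkedLeavesEdges T) 3 := by
  refine ⟨linkedLeavesDecomp hfin hT, ?_⟩
  rintro _ ⟨v, k, hv, rfl⟩
  change (decompBag T _).Finite ∧ (decompBag T _).ncard ≤ 4
  rw [decompBag_pos hv]
  exact hT.finite_and_ncard_bagOf_le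

end TreeLinkedLeaves

open SLTW in
/-- a full binary tree with its leaves linked in left-to-right
(lexicographic) order has tree width at most 3. -/
theorem tree_linked_leaves_treewidth (T : Set (List Bool)) (hfin : T.Finite)
    (hpc : ∀ p q : List Bool, p <+: q → q ∈ T → p ∈ T)
    (hfull : ∀ p ∈ T, (p ++ [false] ∈ T ↔ p ++ [true] ∈ T)) :
    twLE T ({e | ∃ i : Bool, e.2 = e.1 ++ [i] ∧ e.2 ∈ T ∧ e.1 ∈ T} ∪
            {e | isLeaf T e.1 ∧ isLeaf T e.2 ∧ List.Lex (· < ·) e.1 e.2 ∧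
                 ¬ ∃ r, isLeaf T r ∧ List.Lex (· < ·) e.1 r ∧ List.Lex (· < ·) r e.2}) 3 :=
  TreeLinkedLeaves.twLE_linkedLeavesEdges hfin ⟨hpc, hfull⟩
end

section
/- The predicate ls(x,y) ::= x ↦ y | ∃z,t. x ↦ (z,nil) * t ↦ (nil,y) * ls(z,t) defines exactly the family of 'counter' structures: a state S,ι ⊨ ls(x,y) (via some finite unfolding tree) iff its heap consists of locations forming two chains x →₁ ℓ₁ →₁ … →₁ ℓₙ = z' and t' = m_n →₂ … →₂ m₁ →₂ y of equal length n ≥ 0 joined by one edge z' →₁ t' (for n = 0 a single cell x ↦ y). In particular, in every model the number of 1-selector edges before the junction equals the number of 2-selector edges after it. -/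
namespace SLTW

/-- A cell with selector 1 pointing to `a` and selector 2 pointing to `b`. -/
def cell2 (a b : Loc) : Sel → Option Loc :=
  fun k => if k = 1 then some a else if k = 2 then some b else none

/-- A cell with only selector 1 defined, pointing to `a`. -/
def cell1 (a : Loc) : Sel → Option Loc := fun k => if k = 1 then some a else none

/-- Satisfaction of `ls(x,y) ::= x ↦ y | ∃z,t. x ↦ (z,nil) * t ↦ (nil,y) * ls(z,t)`
via some finite unfolding tree (inductively: one constructor per rule, with strict
semantics and disjoint heap composition). `nl` is the location of `nil`. -/
inductive LsSat (nl : Loc) : Heap → Loc → Loc → Prop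
  | base (x y : Loc) :
      LsSat nl (fun l => if l = x then some (cell1 y) else none) x y
  | step (x y z t : Loc) (h' : Heap) :
      LsSat nl h' z t → x ≠ t → h' x = none → h' t = none →
      LsSat nl (fun l => if l = x then some (cell2 z nl) else
                         if l = t then some (cell2 nl y) else h' l) x y

/-- The `counter' structure of length `n`: a chain `x = ℓ₀ →₁ ℓ₁ →₁ … →₁ ℓₙ` (with
second selectors to nil), one junction edge `ℓₙ →₁ mₙ`, and a chain
`mₙ →₂ … →₂ m₁ →₂ m₀ = y` (with first selectors to nil); all `2n+1` allocated
cells pairwise distinct and nothing else allocated. For `n = 0` this is the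
single cell `x ↦ y`. -/
def Counter (nl : Loc) (h : Heap) (x y : Loc) (n : ℕ) : Prop :=
  ∃ ℓ m : ℕ → Loc, ℓ 0 = x ∧ m 0 = y ∧
    (∀ i ≤ n, ∀ j ≤ n, ℓ i = ℓ j → i = j) ∧
    (∀ i j, 1 ≤ i → i ≤ n → 1 ≤ j → j ≤ n → m i = m j → i = j) ∧
    (∀ i ≤ n, ∀ j, 1 ≤ j → j ≤ n → ℓ i ≠ m j) ∧
    (∀ i < n, h (ℓ i) = some (cell2 (ℓ (i+1)) nl)) ∧
    h (ℓ n) = some (cell1 (m n)) ∧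
    (∀ i, 1 ≤ i → i ≤ n → h (m i) = some (cell2 nl (m (i-1)))) ∧
    (∀ l, h l ≠ none → (∃ i ≤ n, l = ℓ i) ∨ (∃ i, 1 ≤ i ∧ i ≤ n ∧ l = m i))

end SLTW

namespace SLTW

private lemma counter_base (nl x y : Loc) :
    Counter nl (fun l => if l = x then some (cell1 y) else none) x y 0 := by
  refine ⟨fun _ => x, fun _ => y, rfl, rfl, ?_, ?_, ?_, ?_, ?_, ?_, ?_⟩
  · omega
  · omega
  · omega
  · omega
  · simp
  · omega
  · intro l hl
    left
    refine ⟨0, le_refl _, ?_⟩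
    by_contra hne
    simp only [if_neg hne] at hl
    exact hl rfl

private lemma counter_step (nl : Loc) (h' : Heap) (x y z t : Loc) (n : ℕ)
    (hc : Counter nl h' z t n) (hxt : x ≠ t) (hx : h' x = none) (ht : h' t = none) :
    Counter nl (fun l => if l = x then some (cell2 z nl) else
                         if l = t then some (cell2 nl y) else h' l) x y (n+1) := by
  obtain ⟨L, M, hL0, hM0, hLinj, hMinj, hLM, hchain, hjunc, hmchain, hdom⟩ := hc
  have hLalloc : ∀ i ≤ n, h' (L i) ≠ none := by
    intro i hi
    rcases lt_or_eq_of_le hi with hlt | heq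
    · rw [hchain i hlt]; simp
    · rw [heq, hjunc]; simp
  have hMalloc : ∀ j, 1 ≤ j → j ≤ n → h' (M j) ≠ none := by
    intro j h1 h2
    rw [hmchain j h1 h2]; simp
  have hLx : ∀ i ≤ n, L i ≠ x := fun i hi he => hLalloc i hi (he ▸ hx)
  have hLt : ∀ i ≤ n, L i ≠ t := fun i hi he => hLalloc i hi (he ▸ ht)
  have hMx : ∀ j, 1 ≤ j → j ≤ n → M j ≠ x := fun j h1 h2 he => hMalloc j h1 h2 (he ▸ hx)
  have hMt : ∀ j, 1 ≤ j → j ≤ n → M j ≠ t := fun j h1 h2 he => hMalloc j h1 h2 (he ▸ ht)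
  refine ⟨fun i => if i = 0 then x else L (i-1), fun i => if i = 0 then y else M (i-1),
    rfl, rfl, ?_, ?_, ?_, ?_, ?_, ?_, ?_⟩
  · -- L injectivity
    intro i hi j hj he
    by_cases hi0 : i = 0 <;> by_cases hj0 : j = 0 <;> simp [hi0, hj0] at he ⊢
    · exact absurd he.symm (hLx (j-1) (by omega))
    · exact absurd he (hLx (i-1) (by omega))
    · have := hLinj (i-1) (by omega) (j-1) (by omega) he; omega
  · -- M injectivity
    intro i j h1 h2 h3 h4 he
    simp only [if_neg (by omega : i ≠ 0), if_neg (by omega : j ≠ 0)] at he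
    by_cases hi1 : i = 1 <;> by_cases hj1 : j = 1
    · omega
    · subst hi1; simp only [show (1:ℕ)-1 = 0 from rfl] at he
      exact absurd (hM0 ▸ he).symm (by exact fun hh => hMt (j-1) (by omega) (by omega) (hM0 ▸ hh))
    · subst hj1; simp only [show (1:ℕ)-1 = 0 from rfl] at he
      exact absurd (hM0 ▸ he) (by exact fun hh => hMt (i-1) (by omega) (by omega) (hM0 ▸ hh))
    · have := hMinj (i-1) (j-1) (by omega) (by omega) (by omega) (by omega) he; omega
  · -- L vs M
    intro i hi j h1 h2 he
    simp only [if_neg (by omega : j ≠ 0)] at he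
    by_cases hi0 : i = 0
    · rw [hi0, if_pos rfl] at he
      by_cases hj1 : j = 1
      · subst hj1; rw [show (1:ℕ)-1 = 0 from rfl, hM0] at he; exact hxt he
      · exact (hMx (j-1) (by omega) (by omega)) he.symm
    · rw [if_neg hi0] at he
      by_cases hj1 : j = 1
      · subst hj1; rw [show (1:ℕ)-1 = 0 from rfl, hM0] at he
        exact hLt (i-1) (by omega) he
      · exact hLM (i-1) (by omega) (j-1) (by omega) (by omega) he
  · -- chain 1
    intro i hi
    by_cases hi0 : i = 0
    · subst hi0; simp [hL0]
    · have h1 : i - 1 < n := by omega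
      simp only [if_neg hi0, if_neg (by omega : i + 1 ≠ 0)]
      rw [if_neg (hLx (i-1) (by omega)), if_neg (hLt (i-1) (by omega)),
        hchain (i-1) h1, show i + 1 - 1 = i - 1 + 1 by omega]
  · -- junction
    simp only [if_neg (by omega : n + 1 ≠ 0)]
    rw [if_neg (hLx (n+1-1) (by omega)), if_neg (hLt (n+1-1) (by omega)),
      show n + 1 - 1 = n from rfl, hjunc]
  · -- m chain
    intro i h1 h2
    simp only [if_neg (by omega : i ≠ 0)]
    by_cases hi1 : i = 1
    · subst hi1
      rw [show (1:ℕ)-1 = 0 from rfl, hM0, if_neg (Ne.symm hxt), if_pos rfl]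
      simp
    · rw [if_neg (hMx (i-1) (by omega) (by omega)), if_neg (hMt (i-1) (by omega) (by omega)),
        hmchain (i-1) (by omega) (by omega), if_neg (by omega : i - 1 ≠ 0)]
  · -- domain
    intro l hl
    by_cases hlx : l = x
    · exact Or.inl ⟨0, by omega, by simp [hlx]⟩
    · by_cases hlt : l = t
      · exact Or.inr ⟨1, le_refl _, by omega, by simp [hlt, hM0.symm]⟩
      · simp only [if_neg hlx, if_neg hlt] at hl
        rcases hdom l hl with ⟨i, hi, he⟩ | ⟨i, h1, h2, he⟩
        · exact Or.inl ⟨i+1, by omega, by simp [he]⟩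
        · exact Or.inr ⟨i+1, by omega, by omega, by simp [he]⟩

private lemma counter_lssat (nl : Loc) (n : ℕ) :
    ∀ h x y, Counter nl h x y n → LsSat nl h x y := by
  induction n with
  | zero =>
    intro h x y hc
    obtain ⟨L, M, hL0, hM0, _, _, _, _, hjunc, _, hdom⟩ := hc
    have : h = fun l => if l = x then some (cell1 y) else none := by
      funext l
      by_cases hlx : l = x
      · subst hlx; rw [if_pos rfl, ← hL0, ← hM0]; exact hjunc
      · rw [if_neg hlx]
        by_contra hne
        rcases hdom l hne with ⟨i, hi, he⟩ | ⟨i, h1, h2, _⟩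
        · exact hlx (by rw [he, show i = 0 by omega, hL0])
        · omega
    rw [this]; exact LsSat.base x y
  | succ n ih =>
    intro h x y hc
    obtain ⟨L, M, hL0, hM0, hLinj, hMinj, hLM, hchain, hjunc, hmchain, hdom⟩ := hc
    set h' : Heap := fun l => if l = x then none else if l = M 1 then none else h l with hh'
    have hLx : ∀ i, 1 ≤ i → i ≤ n + 1 → L i ≠ x := by
      intro i h1 h2 he
      have := hLinj i (by omega) 0 (by omega) (by rw [he, hL0]); omega
    have hLM1 : ∀ i ≤ n + 1, L i ≠ M 1 := fun i hi => hLM i hi 1 (le_refl _) (by omega)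
    have hMx : ∀ j, 1 ≤ j → j ≤ n + 1 → M j ≠ x := by
      intro j h1 h2 he
      exact hLM 0 (by omega) j h1 h2 (by rw [hL0, he])
    have hMM1 : ∀ j, 2 ≤ j → j ≤ n + 1 → M j ≠ M 1 := by
      intro j h1 h2 he
      have := hMinj j 1 (by omega) (by omega) (le_refl _) (by omega) he; omega
    have hc' : Counter nl h' (L 1) (M 1) n := by
      refine ⟨fun i => L (i+1), fun i => M (i+1), rfl, rfl, ?_, ?_, ?_, ?_, ?_, ?_, ?_⟩
      · intro i hi j hj he
        have := hLinj (i+1) (by omega) (j+1) (by omega) he; omega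
      · intro i j h1 h2 h3 h4 he
        have := hMinj (i+1) (j+1) (by omega) (by omega) (by omega) (by omega) he; omega
      · intro i hi j h1 h2
        exact hLM (i+1) (by omega) (j+1) (by omega) (by omega)
      · intro i hi
        rw [hh']
        simp only
        rw [if_neg (hLx (i+1) (by omega) (by omega)), if_neg (hLM1 (i+1) (by omega))]
        exact hchain (i+1) (by omega)
      · rw [hh']
        simp only
        rw [if_neg (hLx (n+1) (by omega) (by omega)), if_neg (hLM1 (n+1) (le_refl _))]
        exact hjunc
      · intro i h1 h2
        rw [hh']
        simp only
        rw [if_neg (hMx (i+1) (by omega) (by omega)), if_neg (hMM1 (i+1) (by omega) (by omega)),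
          hmchain (i+1) (by omega) (by omega), show i + 1 - 1 = i - 1 + 1 by omega]
      · intro l hl
        rw [hh'] at hl
        simp only at hl
        by_cases hlx : l = x
        · rw [if_pos hlx] at hl; exact absurd rfl hl
        · rw [if_neg hlx] at hl
          by_cases hlm : l = M 1
          · rw [if_pos hlm] at hl; exact absurd rfl hl
          · rw [if_neg hlm] at hl
            rcases hdom l hl with ⟨i, hi, he⟩ | ⟨i, h1, h2, he⟩
            · rcases Nat.eq_zero_or_pos i with h0 | h0
              · exact absurd (he.trans (by rw [h0, hL0])) hlx
              · refine Or.inl ⟨i-1, by omega, ?_⟩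
                show l = L (i-1+1)
                rw [show i-1+1 = i by omega]; exact he
            · rcases Nat.lt_or_ge i 2 with h0 | h0
              · exact absurd (by rw [he, show i = 1 by omega]) hlm
              · refine Or.inr ⟨i-1, by omega, by omega, ?_⟩
                show l = M (i-1+1)
                rw [show i-1+1 = i by omega]; exact he
    have hls' := ih h' (L 1) (M 1) hc'
    have hxM1 : x ≠ M 1 := fun he => hLM 0 (by omega) 1 (le_refl _) (by omega) (hL0.symm ▸ he)
    have hh : h = fun l => if l = x then some (cell2 (L 1) nl) else
        if l = M 1 then some (cell2 nl y) else h' l := by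
      funext l
      by_cases hlx : l = x
      · rw [if_pos hlx, hlx, ← hL0]; exact hchain 0 (by omega)
      · rw [if_neg hlx]
        by_cases hlm : l = M 1
        · rw [if_pos hlm, hlm]
          rw [hmchain 1 (le_refl _) (by omega), show (1:ℕ) - 1 = 0 from rfl, hM0]
        · rw [if_neg hlm, hh']
          simp only
          rw [if_neg hlx, if_neg hlm]
    rw [hh]
    exact LsSat.step x y (L 1) (M 1) h' hls' hxM1 (by rw [hh']; simp) (by rw [hh']; simp [Ne.symm hxM1])

end SLTW

open SLTW in
/-- `ls(x,y)` defines exactly the family of `counter' structures: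
two chains of equal length `n ≥ 0` joined by one edge (a single cell `x ↦ y` for
`n = 0`); in particular the number of 1-selector edges before the junction equals
the number of 2-selector edges after it. -/
theorem ls_defines_counters (nl : Loc) (h : Heap) (x y : Loc) :
    LsSat nl h x y ↔ ∃ n : ℕ, Counter nl h x y n := by
  constructor
  · intro hls
    induction hls with
    | base x y => exact ⟨0, counter_base nl x y⟩
    | step x y z t h' _ hxt hx ht ih =>
      obtain ⟨n, hc⟩ := ih
      exact ⟨n+1, counter_step nl h' x y z t n hc hxt hx ht⟩
  · rintro ⟨n, hc⟩
    exact counter_lssat nl n h x y hc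
end

section
/- Bounded model size from basic formulae: if S = ⟨s,h⟩ and ι satisfy a quantifier-free basic SL formula φ ≡ Σ ∧ Π under strict semantics, where the spatial part Σ is a separating conjunction of k points-to atoms, then |dom(h)| = k and |loc(S)| ≤ |Σ| + |img(s)|, where |Σ| counts variable occurrences in Σ. -/
namespace SLTW

def hd (h : Heap) : Set Loc := {l | h l ≠ none}
def hI (h : Heap) : Set Loc := {l | ∃ a f k, h a = some f ∧ f k = some l}

theorem bigStar_size (as : List (Var × List Var)) :
    (bigStar (as.map (fun p => SpatialF.pto p.1 p.2))).size
      = as.length + (as.map (fun p => p.2.length)).sum := by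
  induction as with
  | nil => rfl
  | cons a t ih =>
    simp only [List.map_cons, bigStar, List.foldr_cons] at *
    show (1 + a.2.length) + _ = _
    rw [ih]; simp [List.length_cons]; ring

theorem aux_lemma (s : Store) (ι : LVar → Option Loc) :
    ∀ (as : List (Var × List Var)) (h : Heap),
    SpSat ⟨s, h⟩ ι (bigStar (as.map (fun p => SpatialF.pto p.1 p.2))) →
    (hd h).Finite ∧ (hd h).ncard = as.length ∧
    (hI h).Finite ∧ (hI h).ncard ≤ (as.map (fun p => p.2.length)).sum := by
  intro as
  induction as with
  | nil =>
    intro h hs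
    have he : ∀ l, h l = none := hs
    have h1 : hd h = ∅ := by ext l; simp [hd, he]
    have h2 : hI h = ∅ := by ext l; simp [hI, he]
    simp [h1, h2]
  | cons a t ih =>
    intro h hs
    obtain ⟨h₁, h₂, hdisj, hun, hp, hrest⟩ := hs
    obtain ⟨la, hla, _, hpt⟩ := hp
    obtain ⟨f₂, c₂, fI₂, cI₂⟩ := ih h₂ hrest
    have hpt' : h₁ = ptoHeap s ι la a.2 := hpt
    have hun' : h = heapUnion h₁ h₂ := hun
    -- hd h₁ = {la}
    have hd1 : hd h₁ = {la} := by
      ext l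
      simp only [hd, hpt', ptoHeap, Set.mem_setOf_eq, Set.mem_singleton_iff]
      by_cases hl : l = la <;> simp [hl]
    -- hI h₁ ⊆ filterMap
    have hI1 : hI h₁ ⊆ ↑(a.2.filterMap (eval s ι)).toFinset := by
      intro l hl
      obtain ⟨x, f, k, hx, hk⟩ := hl
      simp only [hpt', ptoHeap] at hx
      by_cases hxla : x = la
      · rw [if_pos hxla, Option.some.injEq] at hx
        subst hx
        have hk' : (if 1 ≤ k ∧ k ≤ a.2.length then eval s ι (a.2.getD (k-1) (Sum.inr 0)) else none) = some l := hk
        clear hk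
        by_cases hc : 1 ≤ k ∧ k ≤ a.2.length
        · rw [if_pos hc] at hk'
          have hlt : k - 1 < a.2.length :=
            Nat.lt_of_lt_of_le (Nat.sub_lt (Nat.lt_of_lt_of_le Nat.one_pos hc.1) Nat.one_pos) hc.2
          simp only [List.coe_toFinset, Set.mem_setOf_eq, List.mem_filterMap]
          refine ⟨a.2.getD (k-1) (Sum.inr 0), ?_, hk'⟩
          rw [List.getD_eq_getElem _ _ hlt]
          exact List.getElem_mem hlt
        · rw [if_neg hc] at hk'
          cases hk'
      · simp [hxla] at hx
    -- unions
    have hdu : hd h = hd h₁ ∪ hd h₂ := by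
      ext l
      simp only [hd, hun', heapUnion, Set.mem_union, Set.mem_setOf_eq]
      cases h₁ l <;> simp [Option.orElse]
    have hIu : hI h ⊆ hI h₁ ∪ hI h₂ := by
      intro l ⟨x, f, k, hx, hk⟩
      simp only [hun', heapUnion] at hx
      rcases h1x : h₁ x with _ | g
      · right; rw [h1x] at hx; simp [Option.orElse] at hx
        exact ⟨x, f, k, hx, hk⟩
      · left; rw [h1x] at hx; simp [Option.orElse] at hx
        exact ⟨x, f, k, by rw [h1x, hx], hk⟩
    have hdisj' : Disjoint (hd h₁) (hd h₂) := by
      rw [Set.disjoint_left]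
      intro l hl1 hl2
      rcases hdisj l with hc | hc
      · exact hl1 hc
      · exact hl2 hc
    have f1 : (hd h₁).Finite := by rw [hd1]; exact Set.finite_singleton la
    have fI1 : (hI h₁).Finite := Set.Finite.subset ((a.2.filterMap (eval s ι)).toFinset.finite_toSet) hI1
    constructor
    · rw [hdu]; exact f1.union f₂
    refine ⟨?_, Set.Finite.subset (fI1.union fI₂) hIu, ?_⟩
    · rw [hdu, Set.ncard_union_eq hdisj' f1 f₂, hd1, c₂]
      simp [Nat.add_comm]
    · calc (hI h).ncard ≤ (hI h₁ ∪ hI h₂).ncard :=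
            Set.ncard_le_ncard hIu (fI1.union fI₂)
        _ ≤ (hI h₁).ncard + (hI h₂).ncard := Set.ncard_union_le _ _
        _ ≤ a.2.length + (t.map (fun p => p.2.length)).sum := by
            have : (hI h₁).ncard ≤ a.2.length := by
              calc (hI h₁).ncard ≤ ((a.2.filterMap (eval s ι)).toFinset : Set Loc).ncard :=
                    Set.ncard_le_ncard hI1 (Finset.finite_toSet _)
                _ = (a.2.filterMap (eval s ι)).toFinset.card := by
                    rw [Set.ncard_coe_finset]
                _ ≤ (a.2.filterMap (eval s ι)).length := List.toFinset_card_le _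
                _ ≤ a.2.length := List.length_filterMap_le _ _
            omega
        _ = ((a :: t).map (fun p => p.2.length)).sum := by simp

end SLTW
open SLTW in
/-- bounded model size from basic formulae: a model of a
quantifier-free `Σ ∧ Π` with `Σ` a separating conjunction of `k` points-to atoms
has `|dom h| = k` and `|loc S| ≤ |Σ| + |img s|`. -/
theorem basic_formula_model_size (S : SLState) (ι : LVar → Option Loc)
    (Pi : PureF) (as : List (Var × List Var)) (hfin : S.simg.Finite)
    (hpure : PureSat S ι Pi)
    (hsp : SpSat S ι (bigStar (as.map (fun p => SpatialF.pto p.1 p.2)))) :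
    S.hdom.ncard = as.length ∧ S.locs.Finite ∧
    S.locs.ncard ≤ (bigStar (as.map (fun p => SpatialF.pto p.1 p.2))).size + S.simg.ncard := by
  obtain ⟨fd, cd, fI, cI⟩ := aux_lemma S.store ι as S.heap (by
    have : S = ⟨S.store, S.heap⟩ := rfl
    rwa [← this])
  have hdom_eq : S.hdom = hd S.heap := rfl
  have hImg_eq : S.hImg = hI S.heap := rfl
  have hlocs : S.locs = S.simg ∪ hd S.heap ∪ hI S.heap := by
    rw [← hdom_eq, ← hImg_eq]; rfl
  refine ⟨by rw [hdom_eq, cd], ?_, ?_⟩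
  · rw [hlocs]; exact (hfin.union fd).union fI
  · calc S.locs.ncard ≤ (S.simg ∪ hd S.heap).ncard + (hI S.heap).ncard := by
          rw [hlocs]; exact Set.ncard_union_le _ _
      _ ≤ S.simg.ncard + (hd S.heap).ncard + (hI S.heap).ncard := by
          have := Set.ncard_union_le S.simg (hd S.heap); omega
      _ ≤ S.simg.ncard + as.length + (as.map (fun p => p.2.length)).sum := by omega
      _ = (bigStar (as.map (fun p => SpatialF.pto p.1 p.2))).size + S.simg.ncard := by
          rw [bigStar_size]; ring
end
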